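/- arXiv:0712.0035 — 10 statements merged into one kernel-verified Lean document; each statement's English description precedes it below -/
import Mathlib

section
/- Consider two Gilbert-Elliot channels with transition probabilities p01, p11 ∈ [0,1]. For a belief pair Ω = (ω1, ω2) ∈ [0,1]², an action a ∈ {1,2} and an observation s ∈ {0,1}, let T(Ω|a,s) be the updated belief pair that replaces ω_a by p11 if s = 1 and by p01 if s = 0, and replaces the other component ω by τ(ω) = ω·p11 + (1−ω)·p01. For a horizon T ≥ 1 define the optimal value functions by backward induction: V_T(Ω) = max(ω1, ω2), and for 1 ≤ t < T, V_t(Ω) = max over a ∈ {1,2} of [ω_a + ω_a·V_{t+1}(T(Ω|a,1)) + (1−ω_a)·V_{t+1}(T(Ω|a,0))]. Define the myopic value functions V̂_t by the same recursion but with the maximization over a replaced by choosing the action a = 1 if ω1 ≥ ω2 and a = 2 otherwise. Then for all 1 ≤ t ≤ T and all Ω ∈ [0,1]², V̂_t(Ω) = V_t(Ω); that is, for N = 2 channels the myopic sensing policy is optimal. -/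
/-- Optimality of the myopic sensing policy for `N = 2` Gilbert-Elliot channels.
`V` is the optimal value function and `Vhat` the myopic value function, both defined
by backward induction over the horizon `T`; they agree on all belief pairs in `[0,1]²`. -/
theorem myopic_optimal_two_channels
    (p01 p11 : ℝ) (hp01 : p01 ∈ Set.Icc (0 : ℝ) 1) (hp11 : p11 ∈ Set.Icc (0 : ℝ) 1)
    (T : ℕ) (hT : 1 ≤ T)
    (τ : ℝ → ℝ) (hτ : ∀ ω, τ ω = ω * p11 + (1 - ω) * p01)
    (V Vhat : ℕ → ℝ × ℝ → ℝ)
    (hVT : ∀ Ω : ℝ × ℝ, V T Ω = max Ω.1 Ω.2)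
    (hVt : ∀ t, 1 ≤ t → t < T → ∀ Ω : ℝ × ℝ,
      V t Ω = max
        (Ω.1 + Ω.1 * V (t + 1) (p11, τ Ω.2) + (1 - Ω.1) * V (t + 1) (p01, τ Ω.2))
        (Ω.2 + Ω.2 * V (t + 1) (τ Ω.1, p11) + (1 - Ω.2) * V (t + 1) (τ Ω.1, p01)))
    (hVhatT : ∀ Ω : ℝ × ℝ, Vhat T Ω = max Ω.1 Ω.2)
    (hVhatt : ∀ t, 1 ≤ t → t < T → ∀ Ω : ℝ × ℝ,
      Vhat t Ω = if Ω.2 ≤ Ω.1 then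
        Ω.1 + Ω.1 * Vhat (t + 1) (p11, τ Ω.2) + (1 - Ω.1) * Vhat (t + 1) (p01, τ Ω.2)
      else
        Ω.2 + Ω.2 * Vhat (t + 1) (τ Ω.1, p11) + (1 - Ω.2) * Vhat (t + 1) (τ Ω.1, p01)) :
    ∀ t, 1 ≤ t → t ≤ T → ∀ Ω : ℝ × ℝ,
      Ω.1 ∈ Set.Icc (0 : ℝ) 1 → Ω.2 ∈ Set.Icc (0 : ℝ) 1 →
      Vhat t Ω = V t Ω := by
  obtain ⟨h01a, h01b⟩ := hp01
  obtain ⟨h11a, h11b⟩ := hp11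
  -- τ maps [0,1] into [0,1]
  have hτIcc : ∀ z ∈ Set.Icc (0:ℝ) 1, τ z ∈ Set.Icc (0:ℝ) 1 := by
    intro z hz
    rw [hτ z]
    constructor
    · nlinarith [hz.1, hz.2]
    · nlinarith [hz.1, hz.2]
  -- symmetry of the myopic value function
  have hsymAux : ∀ n t, 1 ≤ t → t + n = T → ∀ u v : ℝ, Vhat t (u, v) = Vhat t (v, u) := by
    intro n
    induction n with
    | zero =>
      intro t ht hTn u v
      have hEq : t = T := by omega
      subst hEq
      rw [hVhatT, hVhatT]
      exact max_comm u v
    | succ n ih =>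
      intro t ht hTn u v
      have hlt : t < T := by omega
      rw [hVhatt t ht hlt, hVhatt t ht hlt]
      dsimp only
      rcases lt_trichotomy u v with h | h | h
      · rw [if_neg (not_le.mpr h), if_pos (le_of_lt h)]
        rw [ih (t+1) (by omega) (by omega) (τ u) p11, ih (t+1) (by omega) (by omega) (τ u) p01]
      · rw [h]
      · rw [if_pos (le_of_lt h), if_neg (not_le.mpr h)]
        rw [ih (t+1) (by omega) (by omega) p11 (τ v), ih (t+1) (by omega) (by omega) p01 (τ v)]
  have hsym : ∀ t, 1 ≤ t → t ≤ T → ∀ u v : ℝ, Vhat t (u, v) = Vhat t (v, u) :=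
    fun t ht hle => hsymAux (T - t) t ht (by omega)
  -- affinity structure: z ↦ Vhat t (p11, τ z) and z ↦ Vhat t (p01, τ z) are affine,
  -- and the constant of the first equals the value at 1 of the second
  have haff : ∀ n t, 1 ≤ t → t + n = T →
      ∃ P0 P1 Q0 Q1 : ℝ, P0 = Q0 + Q1 ∧
        (∀ z ∈ Set.Icc (0:ℝ) 1, Vhat t (p11, τ z) = P0 + P1 * z) ∧
        (∀ z ∈ Set.Icc (0:ℝ) 1, Vhat t (p01, τ z) = Q0 + Q1 * z) := by
    intro n
    induction n with
    | zero =>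
      intro t ht hTn
      have hEq : t = T := by omega
      subst hEq
      rcases le_total p01 p11 with hΔ | hΔ
      · refine ⟨p11, 0, p01, p11 - p01, by ring, ?_, ?_⟩
        · intro z hz
          rw [hVhatT]
          dsimp only
          rw [max_eq_left (show τ z ≤ p11 by rw [hτ z]; nlinarith [hz.1, hz.2])]
          ring
        · intro z hz
          rw [hVhatT]
          dsimp only
          rw [max_eq_right (show p01 ≤ τ z by rw [hτ z]; nlinarith [hz.1, hz.2]), hτ z]
          ring
      · refine ⟨p01, p11 - p01, p01, 0, by ring, ?_, ?_⟩
        · intro z hz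
          rw [hVhatT]
          dsimp only
          rw [max_eq_right (show p11 ≤ τ z by rw [hτ z]; nlinarith [hz.1, hz.2]), hτ z]
          ring
        · intro z hz
          rw [hVhatT]
          dsimp only
          rw [max_eq_left (show τ z ≤ p01 by rw [hτ z]; nlinarith [hz.1, hz.2])]
          ring
    | succ n ih =>
      intro t ht hTn
      have hlt : t < T := by omega
      obtain ⟨P0, P1, Q0, Q1, h0, hP, hQ⟩ := ih (t+1) (by omega) (by omega)
      have hp01I : p01 ∈ Set.Icc (0:ℝ) 1 := ⟨h01a, h01b⟩
      have hp11I : p11 ∈ Set.Icc (0:ℝ) 1 := ⟨h11a, h11b⟩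
      rcases le_total p01 p11 with hΔ | hΔ
      · refine ⟨p11 + p11*(P0+P1*p01) + (1-p11)*(Q0+Q1*p01),
                (p11-p01)*(p11*P1 + (1-p11)*Q1),
                p01*(1+(P0+P1*p01)-(Q0+Q1*p01)) + (Q0+Q1*p01),
                (p11-p01)*(1+(P0+P1*p01)-(Q0+Q1*p01)), by ring, ?_, ?_⟩
        · intro z hz
          have hzI := hτIcc z hz
          rw [hVhatt t ht hlt]
          dsimp only
          rw [if_pos (show τ z ≤ p11 by rw [hτ z]; nlinarith [hz.1, hz.2])]
          rw [hP (τ z) hzI, hQ (τ z) hzI, hτ z]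
          ring
        · intro z hz
          have hzI := hτIcc z hz
          have hge : p01 ≤ τ z := by rw [hτ z]; nlinarith [hz.1, hz.2]
          rw [hVhatt t ht hlt]
          dsimp only
          by_cases hc : τ z ≤ p01
          · rw [if_pos hc]
            rw [hP (τ z) hzI, hQ (τ z) hzI]
            have heq : τ z = p01 := le_antisymm hc hge
            rw [hτ z] at heq
            rw [hτ z]
            linear_combination (Q0 + Q1 - P0 - 1) * heq + (z*p11 + (1-z)*p01) * h0 - p01 * h0 + z*(p01 - p11) * h0
          · rw [if_neg hc]
            rw [hsym (t+1) (by omega) (by omega) (τ p01) p11,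
                hsym (t+1) (by omega) (by omega) (τ p01) p01]
            rw [hP p01 hp01I, hQ p01 hp01I, hτ z]
            ring
      · refine ⟨p01*(1+(P0+P1*p11)-(Q0+Q1*p11)) + (Q0+Q1*p11),
                (p11-p01)*(1+(P0+P1*p11)-(Q0+Q1*p11)),
                p01 + p01*(P0+P1*p01) + (1-p01)*(Q0+Q1*p01),
                (p11-p01)*(p01*P1 + (1-p01)*Q1), by ring, ?_, ?_⟩
        · intro z hz
          have hzI := hτIcc z hz
          have hge : p11 ≤ τ z := by rw [hτ z]; nlinarith [hz.1, hz.2]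
          rw [hVhatt t ht hlt]
          dsimp only
          by_cases hc : τ z ≤ p11
          · rw [if_pos hc]
            rw [hP (τ z) hzI, hQ (τ z) hzI]
            have heq : τ z = p11 := le_antisymm hc hge
            rw [hτ z] at heq
            rw [hτ z]
            linear_combination (Q0 + Q1 - P0 - 1) * heq + (z*p11 + (1-z)*p01) * h0 - p11 * h0 + (p11 - p01)*(1-z) * h0
          · rw [if_neg hc]
            rw [hsym (t+1) (by omega) (by omega) (τ p11) p11,
                hsym (t+1) (by omega) (by omega) (τ p11) p01]
            rw [hP p11 hp11I, hQ p11 hp11I, hτ z]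
            ring
        · intro z hz
          have hzI := hτIcc z hz
          rw [hVhatt t ht hlt]
          dsimp only
          rw [if_pos (show τ z ≤ p01 by rw [hτ z]; nlinarith [hz.1, hz.2])]
          rw [hP (τ z) hzI, hQ (τ z) hzI, hτ z]
          ring
  -- main downward induction
  have hmain : ∀ n t, 1 ≤ t → t + n = T → ∀ Ω : ℝ × ℝ,
      Ω.1 ∈ Set.Icc (0:ℝ) 1 → Ω.2 ∈ Set.Icc (0:ℝ) 1 → Vhat t Ω = V t Ω := by
    intro n
    induction n with
    | zero =>
      intro t ht hTn Ω _ _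
      have hEq : t = T := by omega
      subst hEq
      rw [hVhatT, hVT]
    | succ n ih =>
      intro t ht hTn Ω hx hy
      obtain ⟨x, y⟩ := Ω
      dsimp only at hx hy
      have hlt : t < T := by omega
      have h1 : 1 ≤ t + 1 := by omega
      have hTn1 : (t + 1) + n = T := by omega
      obtain ⟨P0, P1, Q0, Q1, h0, hP, hQ⟩ := haff n (t+1) h1 hTn1
      have hτx := hτIcc x hx
      have hτy := hτIcc y hy
      have hp01I : p01 ∈ Set.Icc (0:ℝ) 1 := ⟨h01a, h01b⟩
      have hp11I : p11 ∈ Set.Icc (0:ℝ) 1 := ⟨h11a, h11b⟩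
      rw [hVhatt t ht hlt, hVt t ht hlt]
      dsimp only
      rw [← ih (t+1) h1 hTn1 (p11, τ y) hp11I hτy,
          ← ih (t+1) h1 hTn1 (p01, τ y) hp01I hτy,
          ← ih (t+1) h1 hTn1 (τ x, p11) hτx hp11I,
          ← ih (t+1) h1 hTn1 (τ x, p01) hτx hp01I]
      rw [hsym (t+1) h1 (by omega) (τ x) p11, hsym (t+1) h1 (by omega) (τ x) p01]
      rw [hP y hy, hQ y hy, hP x hx, hQ x hx]
      subst h0
      rcases le_or_gt y x with h | h
      · rw [if_pos h, max_eq_left (by nlinarith [h])]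
      · rw [if_neg (not_le.mpr h), max_eq_right (by nlinarith [h])]
  intro t ht hle Ω h1 h2
  exact hmain (T - t) t ht (by omega) Ω h1 h2
end

section
/- Consider two Gilbert-Elliot channels with p01, p11 ∈ [0,1], belief pairs Ω = (ω1, ω2) ∈ [0,1]², and the belief update T(Ω|a,s) that sets ω_a to p11 if s = 1 and to p01 if s = 0 and replaces the other component ω by τ(ω) = ω·p11 + (1−ω)·p01. Let V̂_t (1 ≤ t ≤ T) be the myopic value functions: V̂_T(Ω) = max(ω1, ω2), and V̂_t(Ω) = ω_â + ω_â·V̂_{t+1}(T(Ω|â,1)) + (1−ω_â)·V̂_{t+1}(T(Ω|â,0)), where â is a channel with maximal belief. For a ∈ {1,2} define the one-step-deviation value V̂_T(Ω; a) = ω_a and, for t < T, V̂_t(Ω; a) = ω_a + ω_a·V̂_{t+1}(T(Ω|a,1)) + (1−ω_a)·V̂_{t+1}(T(Ω|a,0)). Then for every 1 ≤ t ≤ T and every Ω ∈ [0,1]²: V̂_t(Ω; 1) − V̂_t(Ω; 2) = ω1 − ω2. In particular, sensing the channel with the larger belief maximizes the one-step-deviation value. -/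
/-- For two Gilbert-Elliot channels, the difference of the one-step-deviation values of the
two actions under the myopic policy equals the difference of the beliefs:
`V̂_t(Ω;1) − V̂_t(Ω;2) = ω1 − ω2`. In particular, sensing the channel with the larger belief
maximizes the one-step-deviation value. -/
theorem myopic_one_step_deviation_difference
    (p01 p11 : ℝ) (hp01 : p01 ∈ Set.Icc (0 : ℝ) 1) (hp11 : p11 ∈ Set.Icc (0 : ℝ) 1)
    (T : ℕ) (hT : 1 ≤ T)
    (τ : ℝ → ℝ) (hτ : ∀ ω, τ ω = ω * p11 + (1 - ω) * p01)
    (Vhat : ℕ → ℝ × ℝ → ℝ) (Vdev : ℕ → ℝ × ℝ → Fin 2 → ℝ)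
    (hVhatT : ∀ Ω : ℝ × ℝ, Vhat T Ω = max Ω.1 Ω.2)
    (hVhatt : ∀ t, 1 ≤ t → t < T → ∀ Ω : ℝ × ℝ,
      Vhat t Ω = if Ω.2 ≤ Ω.1 then
        Ω.1 + Ω.1 * Vhat (t + 1) (p11, τ Ω.2) + (1 - Ω.1) * Vhat (t + 1) (p01, τ Ω.2)
      else
        Ω.2 + Ω.2 * Vhat (t + 1) (τ Ω.1, p11) + (1 - Ω.2) * Vhat (t + 1) (τ Ω.1, p01))
    (hVdevT1 : ∀ Ω : ℝ × ℝ, Vdev T Ω 0 = Ω.1)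
    (hVdevT2 : ∀ Ω : ℝ × ℝ, Vdev T Ω 1 = Ω.2)
    (hVdev1 : ∀ t, 1 ≤ t → t < T → ∀ Ω : ℝ × ℝ,
      Vdev t Ω 0 =
        Ω.1 + Ω.1 * Vhat (t + 1) (p11, τ Ω.2) + (1 - Ω.1) * Vhat (t + 1) (p01, τ Ω.2))
    (hVdev2 : ∀ t, 1 ≤ t → t < T → ∀ Ω : ℝ × ℝ,
      Vdev t Ω 1 =
        Ω.2 + Ω.2 * Vhat (t + 1) (τ Ω.1, p11) + (1 - Ω.2) * Vhat (t + 1) (τ Ω.1, p01)) :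
    ∀ t, 1 ≤ t → t ≤ T → ∀ Ω : ℝ × ℝ,
      Ω.1 ∈ Set.Icc (0 : ℝ) 1 → Ω.2 ∈ Set.Icc (0 : ℝ) 1 →
      (Vdev t Ω 0 - Vdev t Ω 1 = Ω.1 - Ω.2 ∧
       (Ω.2 ≤ Ω.1 → Vdev t Ω 1 ≤ Vdev t Ω 0)) := by
  obtain ⟨h01a, h01b⟩ := hp01
  obtain ⟨h11a, h11b⟩ := hp11
  -- bounds on τ
  have hτ01 : ∀ c : ℝ, 0 ≤ c → c ≤ 1 → 0 ≤ τ c ∧ τ c ≤ 1 := by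
    intro c hc0 hc1; rw [hτ]; constructor <;> nlinarith
  have hτleA : ∀ c : ℝ, 0 ≤ c → c ≤ 1 → p01 ≤ p11 → p01 ≤ τ c ∧ τ c ≤ p11 := by
    intro c hc0 hc1 h; rw [hτ]; constructor <;> nlinarith
  have hτleB : ∀ c : ℝ, 0 ≤ c → c ≤ 1 → p11 ≤ p01 → p11 ≤ τ c ∧ τ c ≤ p01 := by
    intro c hc0 hc1 h; rw [hτ]; constructor <;> nlinarith
  -- the key invariant, by downward induction on t
  have key : ∀ d t, t + d = T → 1 ≤ t →
      ((∀ c : ℝ, 0 ≤ c → c ≤ 1 →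
          Vhat t (p11, τ c) = (1 - c) * Vhat t (p11, p01) + c * Vhat t (p11, p11)) ∧
       (∀ c : ℝ, 0 ≤ c → c ≤ 1 →
          Vhat t (p01, τ c) = (1 - c) * Vhat t (p01, p01) + c * Vhat t (p01, p11)) ∧
       (∀ c : ℝ, 0 ≤ c → c ≤ 1 →
          Vhat t (τ c, p11) = (1 - c) * Vhat t (p01, p11) + c * Vhat t (p11, p11)) ∧
       (∀ c : ℝ, 0 ≤ c → c ≤ 1 →
          Vhat t (τ c, p01) = (1 - c) * Vhat t (p01, p01) + c * Vhat t (p11, p01)) ∧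
       Vhat t (p11, p01) = Vhat t (p01, p11)) := by
    intro d
    induction d with
    | zero =>
      intro t htT _
      have ht : t = T := by omega
      subst ht
      refine ⟨?_, ?_, ?_, ?_, ?_⟩
      · intro c hc0 hc1
        rw [hVhatT (p11, τ c), hVhatT (p11, p01), hVhatT (p11, p11)]
        simp only
        rcases le_total p01 p11 with h | h
        · rw [max_eq_left (hτleA c hc0 hc1 h).2, max_eq_left h, max_self]; ring
        · rw [max_eq_right (hτleB c hc0 hc1 h).1, max_eq_right h, max_self, hτ]; ring
      · intro c hc0 hc1
        rw [hVhatT (p01, τ c), hVhatT (p01, p01), hVhatT (p01, p11)]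
        simp only
        rcases le_total p01 p11 with h | h
        · rw [max_eq_right (hτleA c hc0 hc1 h).1, max_eq_right h, max_self, hτ]; ring
        · rw [max_eq_left (hτleB c hc0 hc1 h).2, max_eq_left h, max_self]; ring
      · intro c hc0 hc1
        rw [hVhatT (τ c, p11), hVhatT (p01, p11), hVhatT (p11, p11)]
        simp only
        rcases le_total p01 p11 with h | h
        · rw [max_eq_right (hτleA c hc0 hc1 h).2, max_eq_right h, max_self]; ring
        · rw [max_eq_left (hτleB c hc0 hc1 h).1, max_eq_left h, max_self, hτ]; ring
      · intro c hc0 hc1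
        rw [hVhatT (τ c, p01), hVhatT (p01, p01), hVhatT (p11, p01)]
        simp only
        rcases le_total p01 p11 with h | h
        · rw [max_eq_left (hτleA c hc0 hc1 h).1, max_eq_left h, max_self, hτ]; ring
        · rw [max_eq_right (hτleB c hc0 hc1 h).2, max_eq_right h, max_self]; ring
      · rw [hVhatT (p11, p01), hVhatT (p01, p11)]
        simp only
        exact max_comm _ _
    | succ d ih =>
      intro t htT ht1
      have htlt : t < T := by omega
      obtain ⟨E1, E2, E3, E4, Es⟩ := ih (t + 1) (by omega) (by omega)
      -- evaluation lemmas for the recursion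
      have hA : ∀ x y : ℝ, y ≤ x →
          Vhat t (x, y) = x + x * Vhat (t + 1) (p11, τ y)
            + (1 - x) * Vhat (t + 1) (p01, τ y) := by
        intro x y hxy
        rw [hVhatt t ht1 htlt (x, y)]
        simp only
        rw [if_pos hxy]
      have hB : ∀ x y : ℝ, 0 ≤ x → x ≤ 1 → x ≤ y →
          Vhat t (x, y) = y + y * Vhat (t + 1) (τ x, p11)
            + (1 - y) * Vhat (t + 1) (τ x, p01) := by
        intro x y hx0 hx1 hxy
        rcases eq_or_lt_of_le hxy with heq | hlt
        · subst heq
          rw [hA x x le_rfl, E1 x hx0 hx1, E2 x hx0 hx1, E3 x hx0 hx1, E4 x hx0 hx1, Es]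
        · rw [hVhatt t ht1 htlt (x, y)]
          simp only
          rw [if_neg (not_le.2 hlt)]
      rcases le_total p01 p11 with h | h
      · -- p01 ≤ p11
        refine ⟨?_, ?_, ?_, ?_, ?_⟩
        · intro c hc0 hc1
          obtain ⟨hlo, hhi⟩ := hτleA c hc0 hc1 h
          obtain ⟨hz, ho⟩ := hτ01 c hc0 hc1
          rw [hA p11 (τ c) hhi, hA p11 p01 h, hA p11 p11 le_rfl,
            E1 (τ c) hz ho, E2 (τ c) hz ho, E1 p01 h01a h01b, E2 p01 h01a h01b,
            E1 p11 h11a h11b, E2 p11 h11a h11b, hτ c]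
          ring
        · intro c hc0 hc1
          obtain ⟨hlo, hhi⟩ := hτleA c hc0 hc1 h
          rw [hB p01 (τ c) h01a h01b hlo, hA p01 p01 le_rfl, hB p01 p11 h01a h01b h,
            E3 p01 h01a h01b, E4 p01 h01a h01b, E1 p01 h01a h01b, E2 p01 h01a h01b, hτ c]
          ring
        · intro c hc0 hc1
          obtain ⟨hlo, hhi⟩ := hτleA c hc0 hc1 h
          obtain ⟨hz, ho⟩ := hτ01 c hc0 hc1
          rw [hB (τ c) p11 hz ho hhi, hB p01 p11 h01a h01b h, hA p11 p11 le_rfl,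
            E3 (τ c) hz ho, E4 (τ c) hz ho, E3 p01 h01a h01b, E4 p01 h01a h01b,
            E1 p11 h11a h11b, E2 p11 h11a h11b, hτ c]
          ring
        · intro c hc0 hc1
          obtain ⟨hlo, hhi⟩ := hτleA c hc0 hc1 h
          rw [hA (τ c) p01 hlo, hA p01 p01 le_rfl, hA p11 p01 h,
            E1 p01 h01a h01b, E2 p01 h01a h01b, hτ c]
          ring
        · rw [hA p11 p01 h, hB p01 p11 h01a h01b h,
            E1 p01 h01a h01b, E2 p01 h01a h01b, E3 p01 h01a h01b, E4 p01 h01a h01b, Es]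
      · -- p11 ≤ p01
        refine ⟨?_, ?_, ?_, ?_, ?_⟩
        · intro c hc0 hc1
          obtain ⟨hlo, hhi⟩ := hτleB c hc0 hc1 h
          rw [hB p11 (τ c) h11a h11b hlo, hB p11 p01 h11a h11b h, hA p11 p11 le_rfl,
            E3 p11 h11a h11b, E4 p11 h11a h11b, E1 p11 h11a h11b, E2 p11 h11a h11b, hτ c]
          ring
        · intro c hc0 hc1
          obtain ⟨hlo, hhi⟩ := hτleB c hc0 hc1 h
          obtain ⟨hz, ho⟩ := hτ01 c hc0 hc1
          rw [hA p01 (τ c) hhi, hA p01 p01 le_rfl, hA p01 p11 h,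
            E1 (τ c) hz ho, E2 (τ c) hz ho, E1 p01 h01a h01b, E2 p01 h01a h01b,
            E1 p11 h11a h11b, E2 p11 h11a h11b, hτ c]
          ring
        · intro c hc0 hc1
          obtain ⟨hlo, hhi⟩ := hτleB c hc0 hc1 h
          rw [hA (τ c) p11 hlo, hA p01 p11 h, hA p11 p11 le_rfl,
            E1 p11 h11a h11b, E2 p11 h11a h11b, hτ c]
          ring
        · intro c hc0 hc1
          obtain ⟨hlo, hhi⟩ := hτleB c hc0 hc1 h
          obtain ⟨hz, ho⟩ := hτ01 c hc0 hc1
          rw [hB (τ c) p01 hz ho hhi, hA p01 p01 le_rfl, hB p11 p01 h11a h11b h,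
            E3 (τ c) hz ho, E4 (τ c) hz ho, E3 p11 h11a h11b, E4 p11 h11a h11b,
            E1 p01 h01a h01b, E2 p01 h01a h01b, hτ c]
          ring
        · rw [hB p11 p01 h11a h11b h, hA p01 p11 h,
            E3 p11 h11a h11b, E4 p11 h11a h11b, E1 p11 h11a h11b, E2 p11 h11a h11b, Es]
  -- main statement
  intro t ht1 htT Ω hΩ1 hΩ2
  rcases eq_or_lt_of_le htT with heq | hlt
  · subst heq
    rw [hVdevT1 Ω, hVdevT2 Ω]
    exact ⟨rfl, fun hle => hle⟩
  · obtain ⟨E1, E2, E3, E4, Es⟩ := key (T - (t + 1)) (t + 1) (by omega) (by omega)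
    have hdiff : Vdev t Ω 0 - Vdev t Ω 1 = Ω.1 - Ω.2 := by
      rw [hVdev1 t ht1 hlt Ω, hVdev2 t ht1 hlt Ω,
        E1 Ω.2 hΩ2.1 hΩ2.2, E2 Ω.2 hΩ2.1 hΩ2.2,
        E3 Ω.1 hΩ1.1 hΩ1.2, E4 Ω.1 hΩ1.1 hΩ1.2, Es]
      ring
    exact ⟨hdiff, fun hle => by linarith⟩
end

section
/- (Structure of myopic sensing, positively correlated case.) Let N ≥ 1, let 0 ≤ p01 ≤ p11 ≤ 1, and let Ω(1) ∈ [0,1]^N be an arbitrary initial belief vector. Let σ : Z/NZ → {1,…,N} be a bijection enumerating the channels so that ω_{σ(0)}(1) ≥ ω_{σ(1)}(1) ≥ … ≥ ω_{σ(N−1)}(1). Let s(1), s(2), … ∈ {0,1} be an arbitrary observation sequence. Define positions k(1) = 0 and k(t+1) = k(t) if s(t) = 1 and k(t+1) = k(t) + 1 (mod N) if s(t) = 0; define actions â(t) = σ(k(t)); and define beliefs recursively by ω_{â(t)}(t+1) = p11 if s(t) = 1, ω_{â(t)}(t+1) = p01 if s(t) = 0, and ω_i(t+1) = τ(ω_i(t))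 for every channel i ≠ â(t), where τ(ω) = ω·p11 + (1−ω)·p01. Then for every t ≥ 1, ω_{â(t)}(t) = max_{1 ≤ i ≤ N} ω_i(t); i.e., the round-robin rule 'stay on the current channel after observing 1, move to the next channel in the fixed circular order after observing 0' always selects a channel of maximal belief, so it implements the myopic sensing policy. -/
/-- Structure of myopic sensing for positively correlated channels (`p01 ≤ p11`):
the round-robin rule "stay after observing 1, move to the next channel in the fixed
circular order after observing 0" always selects a channel of maximal belief. -/
theorem myopic_structure_positively_correlated
    (N : ℕ) (hN : 1 ≤ N) (p01 p11 : ℝ)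
    (h0 : 0 ≤ p01) (h01 : p01 ≤ p11) (h1 : p11 ≤ 1)
    (τ : ℝ → ℝ) (hτ : ∀ x, τ x = x * p11 + (1 - x) * p01)
    (ω : ℕ → Fin N → ℝ) (σ : ZMod N ≃ Fin N)
    (hbelief : ∀ i : Fin N, ω 1 i ∈ Set.Icc (0 : ℝ) 1)
    (hsorted : ∀ m : ℕ, m + 1 < N →
      ω 1 (σ ((m + 1 : ℕ) : ZMod N)) ≤ ω 1 (σ ((m : ℕ) : ZMod N)))
    (s : ℕ → Bool) (k : ℕ → ZMod N)
    (hk1 : k 1 = 0)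
    (hk : ∀ t, 1 ≤ t → k (t + 1) = if s t then k t else k t + 1)
    (hupObs : ∀ t, 1 ≤ t → ω (t + 1) (σ (k t)) = if s t then p11 else p01)
    (hupUnobs : ∀ t, 1 ≤ t → ∀ i : Fin N, i ≠ σ (k t) → ω (t + 1) i = τ (ω t i)) :
    ∀ t, 1 ≤ t → ∀ i : Fin N, ω t i ≤ ω t (σ (k t)) := by
  haveI : NeZero N := ⟨by omega⟩
  have hτmono : ∀ a b : ℝ, a ≤ b → τ a ≤ τ b := by
    intro a b hab; rw [hτ, hτ]; nlinarith
  have hτlb : ∀ x : ℝ, 0 ≤ x → p01 ≤ τ x := by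
    intro x hx; rw [hτ]; nlinarith
  have hτub : ∀ x : ℝ, x ≤ 1 → τ x ≤ p11 := by
    intro x hx; rw [hτ]; nlinarith
  -- for 0 < j < N, σ (c + j) ≠ σ c
  have hne : ∀ (c : ZMod N) (j : ℕ), 0 < j → j < N → σ (c + (j : ZMod N)) ≠ σ c := by
    intro c j hj hjN h
    have h2 : c + (j : ZMod N) = c := σ.injective h
    have h3 : (j : ZMod N) = 0 := by
      have := add_eq_left.mp h2; exact this
    rw [ZMod.natCast_eq_zero_iff] at h3
    have := Nat.le_of_dvd hj h3
    omega
  -- the invariant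
  have key : ∀ t, 1 ≤ t →
      (∀ i : Fin N, 0 ≤ ω t i ∧ ω t i ≤ 1) ∧
      (∀ j : ℕ, j + 1 < N →
        ω t (σ (k t + ((j + 1 : ℕ) : ZMod N))) ≤ ω t (σ (k t + (j : ZMod N)))) := by
    intro t ht
    induction t, ht using Nat.le_induction with
    | base =>
      constructor
      · intro i; exact ⟨(hbelief i).1, (hbelief i).2⟩
      · intro j hj
        have := hsorted j hj
        simpa [hk1] using this
    | succ t ht ih =>
      obtain ⟨ihb, iho⟩ := ih
      have hbnd : ∀ i : Fin N, 0 ≤ ω (t + 1) i ∧ ω (t + 1) i ≤ 1 := by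
        intro i
        by_cases hi : i = σ (k t)
        · rw [hi, hupObs t ht]
          cases s t <;> simp <;> constructor <;> linarith
        · rw [hupUnobs t ht i hi]
          have := (ihb i)
          exact ⟨le_trans h0 (hτlb _ this.1), le_trans (hτub _ this.2) h1⟩
      refine ⟨hbnd, ?_⟩
      intro j hj
      have hNj : 2 ≤ N := by omega
      rcases Bool.eq_false_or_eq_true (s t) with hs | hs
      · -- observed 1: stay
        have hk' : k (t + 1) = k t := by rw [hk t ht, hs]; simp
        have hobs : ω (t + 1) (σ (k t)) = p11 := by rw [hupObs t ht, hs]; simp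
        rcases Nat.eq_zero_or_pos j with hj0 | hjpos
        · subst hj0
          have e2 : k (t + 1) + ((0 : ℕ) : ZMod N) = k t := by rw [hk']; simp
          rw [e2, hobs]
          have n1 : σ (k (t + 1) + ((0 + 1 : ℕ) : ZMod N)) ≠ σ (k t) := by
            rw [hk']; exact hne _ _ (by omega) (by omega)
          rw [hupUnobs t ht _ n1]
          exact hτub _ (ihb _).2
        · have n1 : σ (k (t + 1) + ((j + 1 : ℕ) : ZMod N)) ≠ σ (k t) := by
            rw [hk']; exact hne _ _ (by omega) (by omega)
          have n2 : σ (k (t + 1) + ((j : ℕ) : ZMod N)) ≠ σ (k t) := by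
            rw [hk']; exact hne _ _ (by omega) (by omega)
          rw [hupUnobs t ht _ n1, hupUnobs t ht _ n2, hk']
          exact hτmono _ _ (iho j hj)
      · -- observed 0: move  (hs : s t = false, but branch order: this is the true branch)
        have hk' : k (t + 1) = k t + 1 := by rw [hk t ht, hs]; simp
        have hobs : ω (t + 1) (σ (k t)) = p01 := by rw [hupObs t ht, hs]; simp
        by_cases hcase : j + 2 < N
        · -- both unobserved
          have e1 : k (t + 1) + ((j + 1 : ℕ) : ZMod N) = k t + ((j + 2 : ℕ) : ZMod N) := by
            rw [hk']; push_cast; ring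
          have e2 : k (t + 1) + ((j : ℕ) : ZMod N) = k t + ((j + 1 : ℕ) : ZMod N) := by
            rw [hk']; push_cast; ring
          rw [e1, e2]
          have n1 : σ (k t + ((j + 2 : ℕ) : ZMod N)) ≠ σ (k t) := hne _ _ (by omega) hcase
          have n2 : σ (k t + ((j + 1 : ℕ) : ZMod N)) ≠ σ (k t) := hne _ _ (by omega) (by omega)
          rw [hupUnobs t ht _ n1, hupUnobs t ht _ n2]
          exact hτmono _ _ (iho (j + 1) hcase)
        · -- j + 2 = N : new last position is the observed channel
          have hjN : j + 2 = N := by omega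
          have e1 : k (t + 1) + ((j + 1 : ℕ) : ZMod N) = k t := by
            rw [hk']
            have : ((j + 2 : ℕ) : ZMod N) = 0 := by
              rw [ZMod.natCast_eq_zero_iff]; exact hjN ▸ dvd_refl N
            have e : k t + 1 + ((j + 1 : ℕ) : ZMod N) = k t + ((j + 2 : ℕ) : ZMod N) := by
              push_cast; ring
            rw [e, this, add_zero]
          have e2 : k (t + 1) + ((j : ℕ) : ZMod N) = k t + ((j + 1 : ℕ) : ZMod N) := by
            rw [hk']; push_cast; ring
          rw [e1, e2, hobs]
          have n2 : σ (k t + ((j + 1 : ℕ) : ZMod N)) ≠ σ (k t) := hne _ _ (by omega) (by omega)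
          rw [hupUnobs t ht _ n2]
          exact hτlb _ (ihb _).1
  -- chain down the invariant
  intro t ht i
  obtain ⟨hbnd, hord⟩ := key t ht
  have chain : ∀ j : ℕ, j < N → ω t (σ (k t + (j : ZMod N))) ≤ ω t (σ (k t)) := by
    intro j
    induction j with
    | zero => intro _; simp
    | succ m ihm =>
      intro hm
      have h1 := hord m hm
      have h2 := ihm (by omega)
      calc ω t (σ (k t + ((m + 1 : ℕ) : ZMod N))) ≤ ω t (σ (k t + (m : ZMod N))) := h1
        _ ≤ ω t (σ (k t)) := h2
  set x : ZMod N := σ.symm i - k t with hx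
  have hi : i = σ (k t + ((x.val : ℕ) : ZMod N)) := by
    rw [ZMod.natCast_zmod_val, hx]
    simp
  rw [hi]
  exact chain x.val (ZMod.val_lt x)
end

section
/- (Structure of myopic sensing, negatively correlated case.) Let N ≥ 1, let 0 ≤ p11 < p01 ≤ 1, and let Ω(1) ∈ [0,1]^N be an arbitrary initial belief vector. Let σ : Z/NZ → {1,…,N} be a bijection enumerating the channels so that ω_{σ(0)}(1) ≥ ω_{σ(1)}(1) ≥ … ≥ ω_{σ(N−1)}(1). Let s(1), s(2), … ∈ {0,1} be an arbitrary observation sequence. Define positions k(1) = 0 and: k(t+1) = k(t) if s(t) = 0; if s(t) = 1 then k(t+1) = k(t) + 1 (mod N) when t+1 is odd and k(t+1) = k(t) − 1 (mod N) when t+1 is even. Define actions â(t) = σ(k(t)) and beliefs recursively by ω_{â(t)}(t+1) = p11 if s(t) = 1, ω_{â(t)}(t+1) = p01 if s(t) = 0, and ω_i(t+1) = τ(ω_i(t)) for every channel i ≠ â(t), where τ(ω) = ω·p11 + (1−ω)·p01. Then for every t ≥ 1, ω_{â(t)}(t) = max_{1 ≤ i ≤ N} ω_i(t); i.e., the round-robin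 rule with the circular order reversed in every slot ('stay after observing 0, move to the next channel in the current circular order after observing 1') always selects a channel of maximal belief, so it implements the myopic sensing policy. -/
/-- Direction of the round-robin sweep at time `t`: `+1` in odd slots, `-1` in even slots. -/
def myDir (N : ℕ) (t : ℕ) : ZMod N := if t % 2 = 1 then 1 else -1

lemma myDir_unit (N t : ℕ) : myDir N t = 1 ∨ myDir N t = -1 := by
  unfold myDir; split <;> simp

lemma myDir_mul_self (N t : ℕ) : myDir N t * myDir N t = 1 := by
  rcases myDir_unit N t with h | h <;> rw [h] <;> ring

lemma myDir_succ (N t : ℕ) : myDir N (t + 1) = - myDir N t := by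
  unfold myDir
  rcases Nat.mod_two_eq_zero_or_one t with h | h
  · have h2 : (t + 1) % 2 = 1 := by omega
    simp [h, h2]
  · have h2 : (t + 1) % 2 = 0 := by omega
    simp [h, h2]

lemma myDir_one (N : ℕ) : myDir N 1 = 1 := by simp [myDir]

/-- Structure of myopic sensing for negatively correlated channels (`p11 < p01`):
the round-robin rule with the circular order reversed in every slot ("stay after
observing 0, move to the next channel in the current circular order after observing 1")
always selects a channel of maximal belief. -/
theorem myopic_structure_negatively_correlated
    (N : ℕ) (hN : 1 ≤ N) (p01 p11 : ℝ)
    (h0 : 0 ≤ p11) (h11 : p11 < p01) (h1 : p01 ≤ 1)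
    (τ : ℝ → ℝ) (hτ : ∀ x, τ x = x * p11 + (1 - x) * p01)
    (ω : ℕ → Fin N → ℝ) (σ : ZMod N ≃ Fin N)
    (hbelief : ∀ i : Fin N, ω 1 i ∈ Set.Icc (0 : ℝ) 1)
    (hsorted : ∀ m : ℕ, m + 1 < N →
      ω 1 (σ ((m + 1 : ℕ) : ZMod N)) ≤ ω 1 (σ ((m : ℕ) : ZMod N)))
    (s : ℕ → Bool) (k : ℕ → ZMod N)
    (hk1 : k 1 = 0)
    (hk : ∀ t, 1 ≤ t → k (t + 1) =
      if s t then (if (t + 1) % 2 = 1 then k t + 1 else k t - 1) else k t)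
    (hupObs : ∀ t, 1 ≤ t → ω (t + 1) (σ (k t)) = if s t then p11 else p01)
    (hupUnobs : ∀ t, 1 ≤ t → ∀ i : Fin N, i ≠ σ (k t) → ω (t + 1) i = τ (ω t i)) :
    ∀ t, 1 ≤ t → ∀ i : Fin N, ω t i ≤ ω t (σ (k t)) := by
  haveI : NeZero N := ⟨by omega⟩
  -- facts about τ
  have hτanti : ∀ x y : ℝ, x ≤ y → τ y ≤ τ x := by
    intro x y h; rw [hτ, hτ]; nlinarith
  have hτub : ∀ x : ℝ, 0 ≤ x → τ x ≤ p01 := by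
    intro x h; rw [hτ]; nlinarith
  have hτlb : ∀ x : ℝ, x ≤ 1 → p11 ≤ τ x := by
    intro x h; rw [hτ]; nlinarith
  -- casting facts
  have hcast_ne : ∀ m : ℕ, 0 < m → m < N → ((m : ℕ) : ZMod N) ≠ 0 := by
    intro m h1 h2 h
    have hv := ZMod.val_cast_of_lt h2
    rw [h] at hv
    simp at hv
    omega
  have hneg : ∀ m : ℕ, m ≤ N → ((N - m : ℕ) : ZMod N) = -((m : ℕ) : ZMod N) := by
    intro m hm
    rw [Nat.cast_sub hm, ZMod.natCast_self, zero_sub]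
  -- the key invariant
  have key : ∀ n : ℕ,
      (∀ i, 0 ≤ ω (n + 1) i ∧ ω (n + 1) i ≤ 1) ∧
      (∀ j : ℕ, j + 1 < N →
        ω (n + 1) (σ (k (n + 1) + myDir N (n + 1) * ((j + 1 : ℕ) : ZMod N))) ≤
        ω (n + 1) (σ (k (n + 1) + myDir N (n + 1) * ((j : ℕ) : ZMod N)))) := by
    intro n
    induction n with
    | zero =>
      constructor
      · intro i
        have := hbelief i
        rw [Set.mem_Icc] at this
        exact this
      · intro j hj
        have h := hsorted j hj
        simpa [hk1, myDir_one] using h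
    | succ m ih =>
      obtain ⟨hbd, hsort⟩ := ih
      have hm1 : 1 ≤ m + 1 := by omega
      set e := myDir N (m + 1) with he_def
      have hee : e * e = 1 := myDir_mul_self N (m + 1)
      have hd1 : myDir N (m + 2) = -e := myDir_succ N (m + 1)
      -- channel distinctness
      have hne : ∀ z : ZMod N, e * z ≠ 0 → σ (k (m + 1) - e * z) ≠ σ (k (m + 1)) := by
        intro z hz h
        apply hz
        have := σ.injective h
        exact sub_eq_self.mp this
      have hmul_ne : ∀ z : ZMod N, z ≠ 0 → e * z ≠ 0 := by
        intro z hz h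
        apply hz
        have : e * (e * z) = e * 0 := by rw [h]
        rw [← mul_assoc, hee, one_mul, mul_zero] at this
        exact this
      have hsub : ∀ m' : ℕ, m' ≤ N →
          k (m + 1) - e * ((m' : ℕ) : ZMod N) = k (m + 1) + e * ((N - m' : ℕ) : ZMod N) := by
        intro m' hm'
        rw [hneg m' hm']; ring
      -- bounds
      have hbd' : ∀ i, 0 ≤ ω (m + 2) i ∧ ω (m + 2) i ≤ 1 := by
        intro i
        by_cases hi : i = σ (k (m + 1))
        · rw [hi]
          rw [show m + 2 = (m + 1) + 1 from rfl, hupObs (m + 1) hm1]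
          split <;> constructor <;> linarith
        · rw [show m + 2 = (m + 1) + 1 from rfl, hupUnobs (m + 1) hm1 i hi]
          obtain ⟨ha, hb⟩ := hbd i
          constructor
          · linarith [hτlb (ω (m + 1) i) hb]
          · linarith [hτub (ω (m + 1) i) ha]
      refine ⟨hbd', ?_⟩
      intro j hj
      have hN2 : 2 ≤ N := by omega
      by_cases hs : s (m + 1) = true
      · -- observed 1 : move
        have hkk : k (m + 2) = k (m + 1) - e := by
          rw [show m + 2 = (m + 1) + 1 from rfl, hk (m + 1) hm1, if_pos hs]
          have : (if (m + 1 + 1) % 2 = 1 then k (m+1) + 1 else k (m+1) - 1)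
              = k (m + 1) + myDir N (m + 2) := by
            unfold myDir
            split_ifs with h
            · rfl
            · rw [sub_eq_add_neg]
          rw [this, hd1, ← sub_eq_add_neg]
        have hpos1 : k (m + 2) + myDir N (m + 2) * ((j + 1 : ℕ) : ZMod N)
            = k (m + 1) - e * ((j + 2 : ℕ) : ZMod N) := by
          rw [hkk, hd1]; push_cast; ring
        have hpos0 : k (m + 2) + myDir N (m + 2) * ((j : ℕ) : ZMod N)
            = k (m + 1) - e * ((j + 1 : ℕ) : ZMod N) := by
          rw [hkk, hd1]; push_cast; ring
        rw [hpos1, hpos0]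
        have hne1 : σ (k (m + 1) - e * ((j + 1 : ℕ) : ZMod N)) ≠ σ (k (m + 1)) :=
          hne _ (hmul_ne _ (hcast_ne (j + 1) (by omega) (by omega)))
        have hrhs : ω (m + 2) (σ (k (m + 1) - e * ((j + 1 : ℕ) : ZMod N)))
            = τ (ω (m + 1) (σ (k (m + 1) - e * ((j + 1 : ℕ) : ZMod N)))) :=
          hupUnobs (m + 1) hm1 _ hne1
        by_cases hj2 : j + 2 < N
        · have hne2 : σ (k (m + 1) - e * ((j + 2 : ℕ) : ZMod N)) ≠ σ (k (m + 1)) :=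
            hne _ (hmul_ne _ (hcast_ne (j + 2) (by omega) hj2))
          have hlhs : ω (m + 2) (σ (k (m + 1) - e * ((j + 2 : ℕ) : ZMod N)))
              = τ (ω (m + 1) (σ (k (m + 1) - e * ((j + 2 : ℕ) : ZMod N)))) :=
            hupUnobs (m + 1) hm1 _ hne2
          rw [hlhs, hrhs]
          apply hτanti
          rw [hsub (j + 1) (by omega), hsub (j + 2) (by omega)]
          have H := hsort (N - (j + 2)) (by omega)
          rw [show N - (j + 2) + 1 = N - (j + 1) from by omega] at H
          exact H
        · -- j + 2 = N : left channel is the observed one, belief p11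
          have hjN : j + 2 = N := by omega
          have hz : ((j + 2 : ℕ) : ZMod N) = 0 := by
            rw [hjN, ZMod.natCast_self]
          rw [hz, mul_zero, sub_zero]
          rw [show m + 2 = (m + 1) + 1 from rfl, hupObs (m + 1) hm1, if_pos hs]
          rw [show (m + 1) + 1 = m + 2 from rfl] at hrhs ⊢
          rw [hrhs]
          obtain ⟨_, hb⟩ := hbd (σ (k (m + 1) - e * ((j + 1 : ℕ) : ZMod N)))
          exact hτlb _ hb
      · -- observed 0 : stay
        have hs' : s (m + 1) = false := by simpa using hs
        have hkk : k (m + 2) = k (m + 1) := by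
          rw [show m + 2 = (m + 1) + 1 from rfl, hk (m + 1) hm1, hs']
          simp
        have hpos1 : k (m + 2) + myDir N (m + 2) * ((j + 1 : ℕ) : ZMod N)
            = k (m + 1) - e * ((j + 1 : ℕ) : ZMod N) := by
          rw [hkk, hd1]; push_cast; ring
        have hpos0 : k (m + 2) + myDir N (m + 2) * ((j : ℕ) : ZMod N)
            = k (m + 1) - e * ((j : ℕ) : ZMod N) := by
          rw [hkk, hd1]; ring
        rw [hpos1, hpos0]
        have hne1 : σ (k (m + 1) - e * ((j + 1 : ℕ) : ZMod N)) ≠ σ (k (m + 1)) :=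
          hne _ (hmul_ne _ (hcast_ne (j + 1) (by omega) (by omega)))
        have hlhs : ω (m + 2) (σ (k (m + 1) - e * ((j + 1 : ℕ) : ZMod N)))
            = τ (ω (m + 1) (σ (k (m + 1) - e * ((j + 1 : ℕ) : ZMod N)))) :=
          hupUnobs (m + 1) hm1 _ hne1
        rcases Nat.eq_zero_or_pos j with hj0 | hjpos
        · subst hj0
          have hz : ((0 : ℕ) : ZMod N) = 0 := by norm_num
          rw [hz, mul_zero, sub_zero]
          rw [show m + 2 = (m + 1) + 1 from rfl, hupObs (m + 1) hm1, hs']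
          rw [show (m + 1) + 1 = m + 2 from rfl] at hlhs ⊢
          rw [hlhs]
          obtain ⟨ha, _⟩ := hbd (σ (k (m + 1) - e * ((0 + 1 : ℕ) : ZMod N)))
          exact hτub _ ha
        · have hne0 : σ (k (m + 1) - e * ((j : ℕ) : ZMod N)) ≠ σ (k (m + 1)) :=
            hne _ (hmul_ne _ (hcast_ne j hjpos (by omega)))
          have hrhs : ω (m + 2) (σ (k (m + 1) - e * ((j : ℕ) : ZMod N)))
              = τ (ω (m + 1) (σ (k (m + 1) - e * ((j : ℕ) : ZMod N)))) :=
            hupUnobs (m + 1) hm1 _ hne0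
          rw [hlhs, hrhs]
          apply hτanti
          rw [hsub j (by omega), hsub (j + 1) (by omega)]
          have H := hsort (N - (j + 1)) (by omega)
          rw [show N - (j + 1) + 1 = N - j from by omega] at H
          exact H
  -- conclude : maximum is attained at σ (k t)
  intro t ht i
  obtain ⟨n, rfl⟩ : ∃ n, t = n + 1 := ⟨t - 1, by omega⟩
  obtain ⟨_, hsort⟩ := key n
  set e := myDir N (n + 1) with he_def
  have hee : e * e = 1 := myDir_mul_self N (n + 1)
  have hchain : ∀ j : ℕ, j < N →
      ω (n + 1) (σ (k (n + 1) + e * ((j : ℕ) : ZMod N))) ≤ ω (n + 1) (σ (k (n + 1))) := by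
    intro j
    induction j with
    | zero => intro _; simp
    | succ m ihm =>
      intro h
      exact le_trans (hsort m h) (ihm (by omega))
  set z : ZMod N := e * (σ.symm i - k (n + 1)) with hz_def
  have hzc : ((z.val : ℕ) : ZMod N) = z := ZMod.natCast_rightInverse z
  have hi : i = σ (k (n + 1) + e * ((z.val : ℕ) : ZMod N)) := by
    rw [hzc]
    have : k (n + 1) + e * z = σ.symm i := by
      rw [hz_def]
      have : e * (e * (σ.symm i - k (n + 1))) = σ.symm i - k (n + 1) := by
        rw [← mul_assoc, hee, one_mul]
      rw [this]; ring
    rw [this, Equiv.apply_symm_apply]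
  rw [hi]
  exact hchain z.val (ZMod.val_lt z)
end

section
/- (Belief-ordering invariant, positively correlated case.) In the setting of the round-robin dynamics with 0 ≤ p01 ≤ p11 ≤ 1 — beliefs Ω(t) ∈ [0,1]^N, enumeration σ : Z/NZ → channels sorting the initial beliefs in descending order, positions k(1) = 0, k(t+1) = k(t) if s(t) = 1 and k(t+1) = k(t)+1 (mod N) if s(t) = 0, actions â(t) = σ(k(t)), and belief updates ω_{â(t)}(t+1) = p11 if s(t) = 1, = p01 if s(t) = 0, and ω_i(t+1) = τ(ω_i(t)) for i ≠ â(t) — the beliefs remain sorted in descending order along the fixed circular order starting from the current position: for every t ≥ 1 and every 0 ≤ m ≤ N−2, ω_{σ(k(t)+m mod N)}(t) ≥ ω_{σ(k(t)+m+1 mod N)}(t). -/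
/-- Belief-ordering invariant for the round-robin dynamics with positively correlated
channels (`p01 ≤ p11`): at every time `t`, the beliefs are sorted in descending order
along the fixed circular order starting from the current position `k t`. -/
theorem belief_order_invariant_positively_correlated
    (N : ℕ) (hN : 1 ≤ N) (p01 p11 : ℝ)
    (h0 : 0 ≤ p01) (h01 : p01 ≤ p11) (h1 : p11 ≤ 1)
    (τ : ℝ → ℝ) (hτ : ∀ x, τ x = x * p11 + (1 - x) * p01)
    (ω : ℕ → Fin N → ℝ) (σ : ZMod N ≃ Fin N)
    (hbelief : ∀ i : Fin N, ω 1 i ∈ Set.Icc (0 : ℝ) 1)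
    (hsorted : ∀ m : ℕ, m + 1 < N →
      ω 1 (σ ((m + 1 : ℕ) : ZMod N)) ≤ ω 1 (σ ((m : ℕ) : ZMod N)))
    (s : ℕ → Bool) (k : ℕ → ZMod N)
    (hk1 : k 1 = 0)
    (hk : ∀ t, 1 ≤ t → k (t + 1) = if s t then k t else k t + 1)
    (hupObs : ∀ t, 1 ≤ t → ω (t + 1) (σ (k t)) = if s t then p11 else p01)
    (hupUnobs : ∀ t, 1 ≤ t → ∀ i : Fin N, i ≠ σ (k t) → ω (t + 1) i = τ (ω t i)) :
    ∀ t, 1 ≤ t → ∀ m : ℕ, m + 2 ≤ N →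
      ω t (σ (k t + ((m + 1 : ℕ) : ZMod N))) ≤ ω t (σ (k t + ((m : ℕ) : ZMod N))) := by
  haveI : NeZero N := ⟨by omega⟩
  -- τ properties
  have hτmono : ∀ x y : ℝ, x ≤ y → τ x ≤ τ y := by
    intro x y hxy; rw [hτ, hτ]; nlinarith
  have hτlb : ∀ x : ℝ, 0 ≤ x → p01 ≤ τ x := by
    intro x hx; rw [hτ]; nlinarith
  have hτub : ∀ x : ℝ, x ≤ 1 → τ x ≤ p11 := by
    intro x hx; rw [hτ]; nlinarith
  have hne : ∀ (c : ZMod N) (j : ℕ), 0 < j → j < N → σ (c + (j : ZMod N)) ≠ σ c := by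
    intro c j hj1 hj2 h
    have h2 : c + (j : ZMod N) = c := σ.injective h
    have h3 : (j : ZMod N) = 0 := by
      have := congrArg (fun x => x - c) h2
      simpa [add_comm, add_sub_cancel_right] using this
    have hdvd := (ZMod.natCast_eq_zero_iff j N).mp h3
    exact absurd hdvd (Nat.not_dvd_of_pos_of_lt hj1 hj2)
  have main : ∀ t, 1 ≤ t → (∀ i : Fin N, ω t i ∈ Set.Icc (0:ℝ) 1) ∧
      (∀ m : ℕ, m + 2 ≤ N →
        ω t (σ (k t + ((m + 1 : ℕ) : ZMod N))) ≤ ω t (σ (k t + ((m : ℕ) : ZMod N)))) := by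
    intro t ht
    induction t, ht using Nat.le_induction with
    | base =>
      refine ⟨hbelief, ?_⟩
      intro m hm
      rw [hk1, zero_add, zero_add]
      exact hsorted m (by omega)
    | succ t ht ih =>
      obtain ⟨ihb, iho⟩ := ih
      have hk' := hk t ht
      have hObs := hupObs t ht
      have hbnd : ∀ i : Fin N, ω (t+1) i ∈ Set.Icc (0:ℝ) 1 := by
        intro i
        by_cases hi : i = σ (k t)
        · subst hi
          rw [hObs]
          cases s t <;> simp <;> constructor <;> linarith
        · rw [hupUnobs t ht i hi]
          have := ihb i
          constructor
          · linarith [hτlb (ω t i) this.1]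
          · linarith [hτub (ω t i) this.2]
      refine ⟨hbnd, ?_⟩
      intro m hm
      cases hs : s t with
      | true =>
        rw [hs] at hk'; simp only [if_true] at hk'
        rw [hk']
        rw [hs] at hObs; simp only [if_true] at hObs
        rcases Nat.eq_zero_or_pos m with hm0 | hmpos
        · subst hm0
          have hidx : k t + ((0 : ℕ) : ZMod N) = k t := by push_cast; ring
          rw [hidx, hObs]
          have hne1 : σ (k t + ((0 + 1 : ℕ) : ZMod N)) ≠ σ (k t) :=
            hne (k t) 1 (by omega) (by omega)
          rw [hupUnobs t ht _ hne1]
          exact hτub _ (ihb _).2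
        · have h1 := hne (k t) (m+1) (by omega) (by omega)
          have h2 := hne (k t) m hmpos (by omega)
          rw [hupUnobs t ht _ h1, hupUnobs t ht _ h2]
          exact hτmono _ _ (iho m hm)
      | false =>
        rw [hs] at hk'; simp only [Bool.false_eq_true, if_false] at hk'
        rw [hk']
        rw [hs] at hObs; simp only [Bool.false_eq_true, if_false] at hObs
        rcases Nat.lt_or_ge (m + 2) N with hlt | hge
        · have e1 : k t + 1 + ((m + 1 : ℕ) : ZMod N) = k t + ((m + 1 + 1 : ℕ) : ZMod N) := by
            push_cast; ring
          have e2 : k t + 1 + ((m : ℕ) : ZMod N) = k t + ((m + 1 : ℕ) : ZMod N) := by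
            push_cast; ring
          rw [e1, e2]
          have h1 := hne (k t) (m+1+1) (by omega) (by omega)
          have h2 := hne (k t) (m+1) (by omega) (by omega)
          rw [hupUnobs t ht _ h1, hupUnobs t ht _ h2]
          exact hτmono _ _ (iho (m+1) (by omega))
        · have hmN : m + 2 = N := by omega
          have e1 : k t + 1 + ((m + 1 : ℕ) : ZMod N) = k t := by
            have hz : (1 : ZMod N) + ((m + 1 : ℕ) : ZMod N) = ((N : ℕ) : ZMod N) := by
              rw [← hmN]; push_cast; ring
            rw [add_assoc, hz, ZMod.natCast_self, add_zero]
          have e2 : k t + 1 + ((m : ℕ) : ZMod N) = k t + ((m + 1 : ℕ) : ZMod N) := by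
            push_cast; ring
          rw [e1, e2, hObs]
          have h2 := hne (k t) (m+1) (by omega) (by omega)
          rw [hupUnobs t ht _ h2]
          exact hτlb _ (ihb _).1
  intro t ht m hm
  exact (main t ht).2 m hm
end

section
/- (Belief-ordering invariant, negatively correlated case.) In the setting of the order-reversing round-robin dynamics with 0 ≤ p11 < p01 ≤ 1 — beliefs Ω(t) ∈ [0,1]^N, enumeration σ : Z/NZ → channels sorting the initial beliefs in descending order, positions k(1) = 0, k(t+1) = k(t) if s(t) = 0, and if s(t) = 1 then k(t+1) = k(t)+1 (mod N) when t+1 is odd and k(t+1) = k(t)−1 (mod N) when t+1 is even, actions â(t) = σ(k(t)), and belief updates ω_{â(t)}(t+1) = p11 if s(t) = 1, = p01 if s(t) = 0, and ω_i(t+1) = τ(ω_i(t)) for i ≠ â(t) — the beliefs remain sorted in descending order along the current circular order: for every odd t ≥ 1 and every 0 ≤ m ≤ N−2, ω_{σ(k(t)+m mod N)}(t) ≥ ω_{σ(k(t)+m+1 mod N)}(t), and for every even t ≥ 2 and every 0 ≤ m ≤ N−2, ω_{σ(k(t)−m mod N)}(t) ≥ ω_{σ(k(t)−m−1 mod N)}(t).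 -/
/-!
On `[0, 1]` the map `τ` is order-reversing with extreme values `τ 1 = p11 ≤ τ 0 = p01`, and
observing a channel resets its belief to one of these extremes. Hence if at time `t` the beliefs
decrease along the circle starting at the sensed channel `σ (k t)`, then at time `t + 1` the
unobserved beliefs decrease along the reversed circle; the observed channel is then the largest
belief (`s t = 0`, so the sweep restarts at it) or the smallest (`s t = 1`, so the sweep restarts
at its neighbour, where it is the last entry). The sweep direction thus alternates with the
parity of `t`.
-/

open Set

def beliefUpdate (p01 p11 x : ℝ) : ℝ := x * p11 + (1 - x) * p01

section beliefUpdate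

variable {p01 p11 : ℝ}

theorem beliefUpdate_antitone (hp : p11 ≤ p01) : Antitone (beliefUpdate p01 p11) := by
  intro x y hxy
  simp only [beliefUpdate]
  nlinarith

theorem beliefUpdate_mem_Icc (hp : p11 ≤ p01) {x : ℝ} (hx : x ∈ Icc (0 : ℝ) 1) :
    beliefUpdate p01 p11 x ∈ Icc p11 p01 := by
  obtain ⟨hx₀, hx₁⟩ := hx
  simp only [beliefUpdate, mem_Icc]
  constructor <;> nlinarith

theorem mem_Icc_of_beliefUpdate {α : Type*} (h0 : 0 ≤ p11) (hp : p11 ≤ p01) (h1 : p01 ≤ 1)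
    {f g : α → ℝ} {c : α} {b : Bool} (hf : ∀ x, f x ∈ Icc (0 : ℝ) 1)
    (hgc : g c = if b then p11 else p01) (hg : ∀ x ≠ c, g x = beliefUpdate p01 p11 (f x))
    (x : α) : g x ∈ Icc (0 : ℝ) 1 := by
  by_cases hx : x = c
  · subst hx
    rw [hgc]
    cases b <;> simp only [Bool.false_eq_true, if_true, if_false] <;> constructor <;> linarith
  · obtain ⟨hlo, hhi⟩ := beliefUpdate_mem_Icc hp (hf x)
    rw [hg x hx]
    exact ⟨h0.trans hlo, hhi.trans h1⟩

end beliefUpdate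

section AntitoneAlong

variable {N : ℕ}

def AntitoneAlong (f : ZMod N → ℝ) (c d : ZMod N) : Prop :=
  ∀ m : ℕ, m + 2 ≤ N → f (c + d * (m + 1 : ℕ)) ≤ f (c + d * m)

theorem ZMod.add_mul_natCast_ne_self {c d : ZMod N} (hd : IsUnit d) {j : ℕ} (hj₀ : 0 < j)
    (hjN : j < N) : c + d * j ≠ c := by
  rw [Ne, add_eq_left, hd.mul_right_eq_zero, ZMod.natCast_eq_zero_iff]
  exact Nat.not_dvd_of_pos_of_lt hj₀ hjN

theorem ZMod.add_neg_mul_natCast (c d : ZMod N) {m : ℕ} (hm : m ≤ N) :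
    c + -d * m = c + d * (N - m : ℕ) := by
  rw [Nat.cast_sub hm, ZMod.natCast_self]
  ring

variable {f g : ZMod N → ℝ} {φ : ℝ → ℝ} {c d : ZMod N}

theorem AntitoneAlong.reverse_of_le_head (hd : IsUnit d) (hf : AntitoneAlong f c d)
    (hφ : Antitone φ) (hg : ∀ x ≠ c, g x = φ (f x)) (hc : ∀ x ≠ c, g x ≤ g c) :
    AntitoneAlong g c (-d) := by
  intro m hm
  have hne : c + d * (N - (m + 1) : ℕ) ≠ c :=
    ZMod.add_mul_natCast_ne_self hd (by omega) (by omega)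
  rw [ZMod.add_neg_mul_natCast c d (by omega)]
  rcases Nat.eq_zero_or_pos m with rfl | hm₀
  · simpa using hc _ hne
  · rw [ZMod.add_neg_mul_natCast c d (by omega), hg _ hne,
      hg _ (ZMod.add_mul_natCast_ne_self hd (by omega) (by omega))]
    apply hφ
    have := hf (N - (m + 1)) (by omega)
    rwa [show N - (m + 1) + 1 = N - m by omega] at this

theorem AntitoneAlong.reverse_of_head_le (hd : IsUnit d) (hf : AntitoneAlong f c d)
    (hφ : Antitone φ) (hg : ∀ x ≠ c, g x = φ (f x)) (hc : ∀ x ≠ c, g c ≤ g x) :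
    AntitoneAlong g (c - d) (-d) := by
  intro m hm
  have hshift (j : ℕ) : c - d + -d * j = c + -d * (j + 1 : ℕ) := by push_cast; ring
  have hne : c + d * (N - (m + 1) : ℕ) ≠ c :=
    ZMod.add_mul_natCast_ne_self hd (by omega) (by omega)
  rw [hshift, hshift, ZMod.add_neg_mul_natCast c d (by omega),
    ZMod.add_neg_mul_natCast c d (by omega)]
  rcases (by omega : m + 2 = N ∨ m + 2 < N) with hmN | hmN
  · rw [show N - (m + 1 + 1) = 0 by omega, Nat.cast_zero, mul_zero, add_zero]
    exact hc _ hne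
  · rw [hg _ hne, hg _ (ZMod.add_mul_natCast_ne_self hd (by omega) (by omega))]
    apply hφ
    have := hf (N - (m + 2)) (by omega)
    rwa [show N - (m + 2) + 1 = N - (m + 1) by omega] at this

theorem AntitoneAlong.beliefUpdate_step {p01 p11 : ℝ} {b : Bool} (hd : IsUnit d) (hp : p11 ≤ p01)
    (hf : AntitoneAlong f c d) (hf01 : ∀ x, f x ∈ Icc (0 : ℝ) 1)
    (hgc : g c = if b then p11 else p01) (hg : ∀ x ≠ c, g x = beliefUpdate p01 p11 (f x)) :
    AntitoneAlong g (if b then c - d else c) (-d) := by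
  have hgIcc (x : ZMod N) (hx : x ≠ c) : g x ∈ Icc p11 p01 :=
    hg x hx ▸ beliefUpdate_mem_Icc hp (hf01 x)
  cases b
  · exact hf.reverse_of_le_head hd (beliefUpdate_antitone hp) hg fun x hx => by
      simpa [hgc] using (hgIcc x hx).2
  · exact hf.reverse_of_head_le hd (beliefUpdate_antitone hp) hg fun x hx => by
      simpa [hgc] using (hgIcc x hx).1

end AntitoneAlong

def sweepDirection {R : Type*} [Ring R] (t : ℕ) : R := (-1) ^ (t + 1)

section sweepDirection

variable {R : Type*} [Ring R]

theorem isUnit_sweepDirection (t : ℕ) : IsUnit (sweepDirection t : R) :=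
  isUnit_neg_one.pow _

theorem sweepDirection_succ (t : ℕ) : (sweepDirection (t + 1) : R) = -sweepDirection t := by
  rw [sweepDirection, sweepDirection, pow_succ, mul_neg_one]

theorem sweepDirection_of_odd {t : ℕ} (ht : t % 2 = 1) : (sweepDirection t : R) = 1 :=
  (Nat.odd_iff.mpr ht).add_one.neg_one_pow

theorem sweepDirection_of_even {t : ℕ} (ht : t % 2 = 0) : (sweepDirection t : R) = -1 :=
  (Nat.even_iff.mpr ht).add_one.neg_one_pow

theorem ite_mod_two_eq_sub_sweepDirection (x : R) (t : ℕ) :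
    (if (t + 1) % 2 = 1 then x + 1 else x - 1) = x - sweepDirection t := by
  rcases Nat.mod_two_eq_zero_or_one t with ht | ht
  · rw [if_pos (by omega), sweepDirection_of_even ht, sub_neg_eq_add]
  · rw [if_neg (by omega), sweepDirection_of_odd ht]

end sweepDirection

theorem belief_order_invariant_negatively_correlated_general
    (N : ℕ) (p01 p11 : ℝ)
    (h0 : 0 ≤ p11) (h11 : p11 < p01) (h1 : p01 ≤ 1)
    (τ : ℝ → ℝ) (hτ : ∀ x, τ x = x * p11 + (1 - x) * p01)
    (ω : ℕ → Fin N → ℝ) (σ : ZMod N ≃ Fin N)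
    (hbelief : ∀ i : Fin N, ω 1 i ∈ Set.Icc (0 : ℝ) 1)
    (hsorted : ∀ m : ℕ, m + 1 < N →
      ω 1 (σ ((m + 1 : ℕ) : ZMod N)) ≤ ω 1 (σ ((m : ℕ) : ZMod N)))
    (s : ℕ → Bool) (k : ℕ → ZMod N)
    (hk1 : k 1 = 0)
    (hk : ∀ t, 1 ≤ t → k (t + 1) =
      if s t then (if (t + 1) % 2 = 1 then k t + 1 else k t - 1) else k t)
    (hupObs : ∀ t, 1 ≤ t → ω (t + 1) (σ (k t)) = if s t then p11 else p01)
    (hupUnobs : ∀ t, 1 ≤ t → ∀ i : Fin N, i ≠ σ (k t) → ω (t + 1) i = τ (ω t i)) :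
    (∀ t, 1 ≤ t → t % 2 = 1 → ∀ m : ℕ, m + 2 ≤ N →
      ω t (σ (k t + ((m + 1 : ℕ) : ZMod N))) ≤ ω t (σ (k t + ((m : ℕ) : ZMod N)))) ∧
    (∀ t, 2 ≤ t → t % 2 = 0 → ∀ m : ℕ, m + 2 ≤ N →
      ω t (σ (k t - ((m + 1 : ℕ) : ZMod N))) ≤ ω t (σ (k t - ((m : ℕ) : ZMod N)))) := by
  obtain rfl : τ = beliefUpdate p01 p11 := funext hτ
  have invariant (t : ℕ) (ht : 1 ≤ t) : (∀ i, ω t i ∈ Icc (0 : ℝ) 1) ∧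
      AntitoneAlong (ω t ∘ σ) (k t) (sweepDirection t) := by
    induction t, ht using Nat.le_induction with
    | base =>
      exact ⟨hbelief, fun m hm => by simpa [hk1, sweepDirection] using hsorted m (by omega)⟩
    | succ t ht ih =>
      obtain ⟨hbound, hanti⟩ := ih
      refine ⟨mem_Icc_of_beliefUpdate h0 h11.le h1 hbound (hupObs t ht) (hupUnobs t ht), ?_⟩
      rw [hk t ht, ite_mod_two_eq_sub_sweepDirection, sweepDirection_succ]
      exact hanti.beliefUpdate_step (isUnit_sweepDirection t) h11.le (fun x => hbound (σ x))
        (hupObs t ht) fun x hx => hupUnobs t ht _ (σ.injective.ne hx)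
  refine ⟨fun t ht hodd m hm => ?_, fun t ht heven m hm => ?_⟩
  · simpa [sweepDirection_of_odd hodd] using (invariant t ht).2 m hm
  · simpa [sweepDirection_of_even heven, sub_eq_add_neg] using (invariant t (by omega)).2 m hm

/-- Belief-ordering invariant for the order-reversing round-robin dynamics with negatively
correlated channels (`p11 < p01`): at every odd time the beliefs are sorted in descending
order along the initial circular order starting from the current position, and at every even
time along the reversed circular order. -/
theorem belief_order_invariant_negatively_correlated
    (N : ℕ) (hN : 1 ≤ N) (p01 p11 : ℝ)
    (h0 : 0 ≤ p11) (h11 : p11 < p01) (h1 : p01 ≤ 1)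
    (τ : ℝ → ℝ) (hτ : ∀ x, τ x = x * p11 + (1 - x) * p01)
    (ω : ℕ → Fin N → ℝ) (σ : ZMod N ≃ Fin N)
    (hbelief : ∀ i : Fin N, ω 1 i ∈ Set.Icc (0 : ℝ) 1)
    (hsorted : ∀ m : ℕ, m + 1 < N →
      ω 1 (σ ((m + 1 : ℕ) : ZMod N)) ≤ ω 1 (σ ((m : ℕ) : ZMod N)))
    (s : ℕ → Bool) (k : ℕ → ZMod N)
    (hk1 : k 1 = 0)
    (hk : ∀ t, 1 ≤ t → k (t + 1) =
      if s t then (if (t + 1) % 2 = 1 then k t + 1 else k t - 1) else k t)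
    (hupObs : ∀ t, 1 ≤ t → ω (t + 1) (σ (k t)) = if s t then p11 else p01)
    (hupUnobs : ∀ t, 1 ≤ t → ∀ i : Fin N, i ≠ σ (k t) → ω (t + 1) i = τ (ω t i)) :
    (∀ t, 1 ≤ t → t % 2 = 1 → ∀ m : ℕ, m + 2 ≤ N →
      ω t (σ (k t + ((m + 1 : ℕ) : ZMod N))) ≤ ω t (σ (k t + ((m : ℕ) : ZMod N)))) ∧
    (∀ t, 2 ≤ t → t % 2 = 0 → ∀ m : ℕ, m + 2 ≤ N →
      ω t (σ (k t - ((m + 1 : ℕ) : ZMod N))) ≤ ω t (σ (k t - ((m : ℕ) : ZMod N)))) :=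
  belief_order_invariant_negatively_correlated_general N p01 p11 h0 h11 h1 τ hτ ω σ hbelief hsorted
    s k hk1 hk hupObs hupUnobs
end

section
/- (Throughput of the myopic policy for two channels, case p11 ≥ p01.) Let 0 ≤ p01 ≤ p11 < 1, let p10 = 1 − p11, and write p01^{(m)} for the (0,1) entry of the m-th power of the 2×2 transition matrix with rows (1−p01, p01) and (1−p11, p11). Consider the Markov chain on the positive integers (transmission-period lengths) with transition probabilities r_{i,1} = 1 − p01^{(i+1)} and r_{i,j} = p01^{(i+1)}·p11^{j−2}·p10 for j ≥ 2. Define ω̄ = p01^{(2)}/(1 + p01^{(2)} − A), where p01^{(2)} = p00·p01 + p01·p11 and A = [p01/(1 + p01 − p11)]·(1 − (p11 − p01)³·(1 − p11)/(1 − p11² + p11·p01)). Then the sequence λ given by λ_1 = 1 − ω̄ and λ_k = ω̄·p11^{k−2}·p10 for k ≥ 2 is a probability distribution (λ_k ≥ 0 and Σ_k λ_k = 1) satisfying the stationarity equations Σ_i λ_i·r_{i,j} = λ_j for every j ≥ 1; moreover its mean satisfies Σ_k k·λ_k = 1 + ω̄/(1 − p11), and consequently the steady-state throughput U = 1 − 1/(Σ_k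 k·λ_k) equals 1 − (1 − p11)/(1 + ω̄ − p11). -/
/-!
Put `d = p11 - p01` and `π = p01 / (1 - d)`. The transition matrix is then
`transitionMatrix π d`, and these matrices multiply by multiplying their `d`'s, so
`(P ^ m) 0 1 = π (1 - d ^ m)`. The candidate `λ` is the mass `1 - ω̄` on length `1` followed by a
geometric tail of ratio `p11`, so every series involved is geometric. For `j ≥ 2` the transition
probability `r i j` factors as `(P ^ (i + 1)) 0 1 * g j` with `g j = p11 ^ (j - 2) * p10` and
`λ j = ω̄ * g j`, so stationarity reduces to the single equation `∑ λ i (P ^ (i + 1)) 0 1 = ω̄`,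
which is the fixed-point equation that defines `ω̄`.
-/

open Set

namespace GilbertElliott

variable {R : Type*} [CommRing R]

/-- The two-state transition matrix with stationary probability `π` of state `1` and second
eigenvalue `d`. -/
def transitionMatrix (π d : R) : Matrix (Fin 2) (Fin 2) R :=
  !![1 - π * (1 - d), π * (1 - d); 1 - π * (1 - d) - d, π * (1 - d) + d]

theorem transitionMatrix_one (π : R) : transitionMatrix π 1 = 1 := by
  rw [transitionMatrix, Matrix.one_fin_two]
  simp only [EmbeddingLike.apply_eq_iff_eq, Matrix.vecCons_inj, and_true]
  refine ⟨⟨?_, ?_⟩, ?_, ?_⟩ <;> ring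

theorem transitionMatrix_mul (π d e : R) :
    transitionMatrix π d * transitionMatrix π e = transitionMatrix π (d * e) := by
  rw [transitionMatrix, transitionMatrix, transitionMatrix, Matrix.mul_fin_two]
  simp only [EmbeddingLike.apply_eq_iff_eq, Matrix.vecCons_inj, and_true]
  refine ⟨⟨?_, ?_⟩, ?_, ?_⟩ <;> ring

theorem transitionMatrix_pow (π d : R) (m : ℕ) :
    transitionMatrix π d ^ m = transitionMatrix π (d ^ m) := by
  induction m with
  | zero => rw [pow_zero, pow_zero, transitionMatrix_one]
  | succ m ih => rw [pow_succ, ih, transitionMatrix_mul, pow_succ]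

theorem transitionMatrix_pow_apply_zero_one (π d : R) (m : ℕ) :
    (transitionMatrix π d ^ m) 0 1 = π * (1 - d ^ m) := by
  rw [transitionMatrix_pow]
  simp [transitionMatrix]

theorem eq_transitionMatrix {K : Type*} [Field K] {p01 p11 : K} (h : 1 - (p11 - p01) ≠ 0) :
    !![1 - p01, p01; 1 - p11, p11] = transitionMatrix (p01 / (1 - (p11 - p01))) (p11 - p01) := by
  rw [transitionMatrix, div_mul_cancel₀ _ h, sub_sub_sub_cancel_right, add_sub_cancel]

end GilbertElliott

section GeometricTail

variable {𝕜 : Type*} [NormedField 𝕜] {f : ℕ → 𝕜} {c a x : 𝕜}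

theorem hasSum_of_geometric_tail (hf0 : f 0 = c) (hf : ∀ k, f (k + 1) = a * x ^ k)
    (hx : ‖x‖ < 1) : HasSum f (c + a * (1 - x)⁻¹) := by
  have htail : HasSum (fun k => f (k + 1)) (a * (1 - x)⁻¹) := by
    simpa only [hf] using (hasSum_geometric_of_norm_lt_one hx).mul_left a
  simpa [hf0, add_comm] using (hasSum_nat_add_iff 1).mp htail

theorem hasSum_mul_pow_of_geometric_tail (hf0 : f 0 = c) (hf : ∀ k, f (k + 1) = a * x ^ k)
    {y : 𝕜} (hxy : ‖x * y‖ < 1) :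
    HasSum (fun k => f k * y ^ k) (c + a * y * (1 - x * y)⁻¹) :=
  hasSum_of_geometric_tail (by simp [hf0]) (fun k => by rw [hf, pow_succ, mul_pow]; ring) hxy

theorem hasSum_succ_mul_of_geometric_tail [CompleteSpace 𝕜] (hf0 : f 0 = c)
    (hf : ∀ k, f (k + 1) = a * x ^ k) (hx : ‖x‖ < 1) :
    HasSum (fun k : ℕ => ((k : 𝕜) + 1) * f k) (c + a * (2 - x) / (1 - x) ^ 2) := by
  have hx1 : 1 - x ≠ 0 := sub_ne_zero.mpr fun h => by simp [← h] at hx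
  have htail : HasSum (fun k => (((k + 1 : ℕ) : 𝕜) + 1) * f (k + 1))
      (a * (x / (1 - x) ^ 2) + 2 * a * (1 - x)⁻¹) :=
    (((hasSum_coe_mul_geometric_of_norm_lt_one hx).mul_left a).add
      ((hasSum_geometric_of_norm_lt_one hx).mul_left (2 * a))).congr_fun fun k => by
        rw [hf]; push_cast; ring
  have hsum : c + a * (2 - x) / (1 - x) ^ 2
      = a * (x / (1 - x) ^ 2) + 2 * a * (1 - x)⁻¹ + ∑ i ∈ Finset.range 1, ((i : 𝕜) + 1) * f i := by
    rw [Finset.sum_range_one, hf0]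
    field_simp
    ring
  rw [hsum]
  exact (hasSum_nat_add_iff 1).mp htail

end GeometricTail

theorem tsum_mul_transition_eq {α : Type*} [Ring α] [TopologicalSpace α] [IsTopologicalRing α]
    [T2Space α] {lam s g : ℕ → α} {r : ℕ → ℕ → α} {ω : α}
    (hr1 : ∀ i, 1 ≤ i → r i 1 = 1 - s i) (hr2 : ∀ i, 1 ≤ i → ∀ j, 2 ≤ j → r i j = s i * g j)
    (hlam1 : lam 1 = 1 - ω) (hlam2 : ∀ j, 2 ≤ j → lam j = ω * g j)
    (htot : HasSum (fun i => lam (i + 1)) 1) (hs : HasSum (fun i => lam (i + 1) * s (i + 1)) ω)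
    {j : ℕ} (hj : 1 ≤ j) : ∑' i, lam (i + 1) * r (i + 1) j = lam j := by
  obtain rfl | hj2 := hj.eq_or_lt
  · rw [hlam1]
    refine ((htot.sub hs).congr_fun fun i => ?_).tsum_eq
    rw [hr1 _ (Nat.le_add_left 1 i), mul_sub, mul_one]
  · rw [hlam2 j hj2]
    refine ((hs.mul_right (g j)).congr_fun fun i => ?_).tsum_eq
    rw [hr2 _ (Nat.le_add_left 1 i) j hj2, mul_assoc]

namespace GilbertElliott

/-- The paper's `ω̄`, written in terms of `π`, `d` and `p = p11`. -/
noncomputable def weight (π d p : ℝ) : ℝ :=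
  π * (1 - d ^ 2) / (1 + π * (1 - d ^ 2) - π * (1 - d ^ 3 * (1 - p) / (1 - p * d)))

theorem eq_weight {p01 p11 : ℝ} (h : 1 - (p11 - p01) ≠ 0) :
    ((1 - p01) * p01 + p01 * p11) / (1 + ((1 - p01) * p01 + p01 * p11) - p01 / (1 + p01 - p11) *
      (1 - (p11 - p01) ^ 3 * (1 - p11) / (1 - p11 ^ 2 + p11 * p01))) =
      weight (p01 / (1 - (p11 - p01))) (p11 - p01) p11 := by
  have hsq : (1 - p01) * p01 + p01 * p11 = p01 / (1 - (p11 - p01)) * (1 - (p11 - p01) ^ 2) := by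
    field_simp
    ring
  rw [weight, hsq, show 1 + p01 - p11 = 1 - (p11 - p01) by ring,
    show 1 - p11 ^ 2 + p11 * p01 = 1 - p11 * (p11 - p01) by ring]

section Weight

variable {π d p : ℝ}

theorem weight_numerator_lt_denominator (hπ : π ∈ Ico 0 1) (hd : d ∈ Icc 0 1)
    (hp : p ∈ Ico 0 1) :
    π * (1 - d ^ 2) < 1 + π * (1 - d ^ 2) - π * (1 - d ^ 3 * (1 - p) / (1 - p * d)) := by
  obtain ⟨hπ0, hπ1⟩ := hπ
  obtain ⟨hd0, hd1⟩ := hd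
  obtain ⟨hp0, hp1⟩ := hp
  have hpd : 0 < 1 - p * d := by nlinarith
  have hF : 0 ≤ d ^ 3 * (1 - p) / (1 - p * d) :=
    div_nonneg (mul_nonneg (pow_nonneg hd0 3) (by linarith)) hpd.le
  nlinarith

theorem weight_numerator_nonneg (hπ : π ∈ Ico 0 1) (hd : d ∈ Icc 0 1) : 0 ≤ π * (1 - d ^ 2) :=
  mul_nonneg hπ.1 (by nlinarith [hd.1, hd.2])

theorem weight_mem_Icc (hπ : π ∈ Ico 0 1) (hd : d ∈ Icc 0 1) (hp : p ∈ Ico 0 1) :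
    weight π d p ∈ Icc 0 1 := by
  have hnum := weight_numerator_nonneg hπ hd
  have hden := weight_numerator_lt_denominator hπ hd hp
  exact ⟨div_nonneg hnum (hnum.trans hden.le), (div_le_one (hnum.trans_lt hden)).mpr hden.le⟩

theorem weight_fixed_point (hπ : π ∈ Ico 0 1) (hd : d ∈ Icc 0 1) (hp : p ∈ Ico 0 1) :
    π * (1 - d ^ 2 * (1 - weight π d p + weight π d p * (1 - p) * d * (1 - p * d)⁻¹)) =
      weight π d p := by
  have hden := (weight_numerator_nonneg hπ hd).trans_lt (weight_numerator_lt_denominator hπ hd hp)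
  have hw := div_mul_cancel₀ (π * (1 - d ^ 2)) hden.ne'
  rw [← weight] at hw
  linear_combination -hw

end Weight

/-! Below, `f k` plays the role of `λ (k + 1)`: lengths are shifted to start at `0`. -/

section LengthDistribution

variable {f : ℕ → ℝ} {ω p : ℝ}

theorem nonneg_of_geometric_tail (hf0 : f 0 = 1 - ω) (hf : ∀ k, f (k + 1) = ω * (1 - p) * p ^ k)
    (hω : ω ∈ Icc 0 1) (hp : p ∈ Ico 0 1) (k : ℕ) : 0 ≤ f k := by
  cases k with
  | zero => rw [hf0]; linarith [hω.2]
  | succ k => rw [hf]; exact mul_nonneg (mul_nonneg hω.1 (by linarith [hp.2])) (pow_nonneg hp.1 k)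

theorem hasSum_eq_one (hf0 : f 0 = 1 - ω) (hf : ∀ k, f (k + 1) = ω * (1 - p) * p ^ k)
    (hp : p ∈ Ico 0 1) : HasSum f 1 := by
  have h := hasSum_of_geometric_tail hf0 hf (by rw [Real.norm_of_nonneg hp.1]; exact hp.2)
  rwa [mul_inv_cancel_right₀ (by linarith [hp.2]), sub_add_cancel] at h

theorem hasSum_succ_mul_eq (hf0 : f 0 = 1 - ω) (hf : ∀ k, f (k + 1) = ω * (1 - p) * p ^ k)
    (hp : p ∈ Ico 0 1) : HasSum (fun k : ℕ => ((k : ℝ) + 1) * f k) (1 + ω / (1 - p)) := by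
  have hp1 : 1 - p ≠ 0 := by linarith [hp.2]
  have h := hasSum_succ_mul_of_geometric_tail hf0 hf
    (by rw [Real.norm_of_nonneg hp.1]; exact hp.2)
  rwa [show 1 - ω + ω * (1 - p) * (2 - p) / (1 - p) ^ 2 = 1 + ω / (1 - p) by
    field_simp
    ring] at h

theorem hasSum_mul_transitionMatrix_pow {π d : ℝ} (hf0 : f 0 = 1 - ω)
    (hf : ∀ k, f (k + 1) = ω * (1 - p) * p ^ k) (hπ : π ∈ Ico 0 1) (hd : d ∈ Icc 0 1)
    (hp : p ∈ Ico 0 1) (hω : ω = weight π d p) :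
    HasSum (fun i => f i * (transitionMatrix π d ^ (i + 2)) 0 1) ω := by
  have hpd : ‖p * d‖ < 1 := by
    rw [Real.norm_of_nonneg (mul_nonneg hp.1 hd.1)]
    nlinarith [hp.1, hp.2, hd.1, hd.2]
  have h := ((hasSum_eq_one hf0 hf hp).mul_left π).sub
    ((hasSum_mul_pow_of_geometric_tail hf0 hf hpd).mul_left (π * d ^ 2))
  have hfix := weight_fixed_point hπ hd hp
  rw [← hω] at hfix
  rw [mul_one, mul_assoc, ← mul_one_sub, hfix] at h
  refine h.congr_fun fun i => ?_
  rw [transitionMatrix_pow_apply_zero_one]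
  ring

end LengthDistribution

end GilbertElliott

open GilbertElliott in
/-- Throughput of the myopic policy for two channels, case `p11 ≥ p01`: the explicit
sequence `λ` is a probability distribution on the positive integers, is stationary for the
transmission-period-length Markov chain with transition probabilities `r`, has mean
`1 + ω̄/(1−p11)`, and yields steady-state throughput
`U = 1 − 1/L̄ = 1 − (1−p11)/(1+ω̄−p11)`. -/
theorem myopic_throughput_two_channels_pos
    (p01 p11 p10 p00 : ℝ)
    (h0 : 0 ≤ p01) (h01 : p01 ≤ p11) (h1 : p11 < 1)
    (hp10 : p10 = 1 - p11) (hp00 : p00 = 1 - p01)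
    (P : Matrix (Fin 2) (Fin 2) ℝ)
    (hP : P = !![1 - p01, p01; 1 - p11, p11])
    (r : ℕ → ℕ → ℝ)
    (hr1 : ∀ i, 1 ≤ i → r i 1 = 1 - (P ^ (i + 1)) 0 1)
    (hr2 : ∀ i, 1 ≤ i → ∀ j, 2 ≤ j → r i j = (P ^ (i + 1)) 0 1 * p11 ^ (j - 2) * p10)
    (p01two A ωbar : ℝ)
    (hp01two : p01two = p00 * p01 + p01 * p11)
    (hA : A = p01 / (1 + p01 - p11) *
      (1 - (p11 - p01) ^ 3 * (1 - p11) / (1 - p11 ^ 2 + p11 * p01)))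
    (hωbar : ωbar = p01two / (1 + p01two - A))
    (lam : ℕ → ℝ)
    (hlam1 : lam 1 = 1 - ωbar)
    (hlam2 : ∀ k, 2 ≤ k → lam k = ωbar * p11 ^ (k - 2) * p10) :
    (∀ k, 1 ≤ k → 0 ≤ lam k) ∧
    (∑' k : ℕ, lam (k + 1)) = 1 ∧
    (∀ j, 1 ≤ j → (∑' i : ℕ, lam (i + 1) * r (i + 1) j) = lam j) ∧
    (∑' k : ℕ, ((k : ℝ) + 1) * lam (k + 1)) = 1 + ωbar / (1 - p11) ∧
    1 - 1 / (∑' k : ℕ, ((k : ℝ) + 1) * lam (k + 1)) =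
      1 - (1 - p11) / (1 + ωbar - p11) := by
  have hd1 : 0 < 1 - (p11 - p01) := by linarith
  have hω : ωbar = weight (p01 / (1 - (p11 - p01))) (p11 - p01) p11 := by
    rw [hωbar, hp01two, hA, hp00, eq_weight hd1.ne']
  rw [eq_transitionMatrix hd1.ne'] at hP
  have hπ : p01 / (1 - (p11 - p01)) ∈ Ico 0 1 :=
    ⟨div_nonneg h0 hd1.le, (div_lt_one hd1).mpr (by linarith)⟩
  have hd : p11 - p01 ∈ Icc 0 1 := ⟨sub_nonneg.mpr h01, by linarith⟩
  have hp : p11 ∈ Ico 0 1 := ⟨h0.trans h01, h1⟩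
  have hf : ∀ k, lam (k + 1 + 1) = ωbar * (1 - p11) * p11 ^ k := fun k => by
    rw [hlam2 _ (by omega), show k + 1 + 1 - 2 = k by omega, hp10]
    ring
  have htot := hasSum_eq_one (f := fun k => lam (k + 1)) hlam1 hf hp
  have hmean := hasSum_succ_mul_eq (f := fun k => lam (k + 1)) hlam1 hf hp
  have hs : HasSum (fun i => lam (i + 1) * (P ^ (i + 1 + 1)) 0 1) ωbar :=
    hP ▸ hasSum_mul_transitionMatrix_pow (f := fun k => lam (k + 1)) hlam1 hf hπ hd hp hω
  refine ⟨fun k hk => ?_, htot.tsum_eq,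
    fun j => tsum_mul_transition_eq hr1 (fun i hi j hj => by rw [hr2 i hi j hj, mul_assoc]) hlam1
      (fun j hj => by rw [hlam2 j hj, mul_assoc]) htot hs, hmean.tsum_eq, ?_⟩
  · simpa [Nat.sub_add_cancel hk] using
      nonneg_of_geometric_tail (f := fun k => lam (k + 1)) hlam1 hf (hω ▸ weight_mem_Icc hπ hd hp)
        hp (k - 1)
  · rw [hmean.tsum_eq, show 1 + ωbar / (1 - p11) = (1 + ωbar - p11) / (1 - p11) by
      field_simp [(sub_pos.mpr h1).ne']
      ring, one_div_div]
end

section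
/- (Throughput of the myopic policy for two channels, case p11 < p01.) Let 0 ≤ p11 < p01 ≤ 1, let p10 = 1 − p11 and p00 = 1 − p01, and write p11^{(m)} and p10^{(m)} = 1 − p11^{(m)} for the (1,1) and (1,0) entries of the m-th power of the 2×2 transition matrix with rows (p00, p01) and (p10, p11). Consider the Markov chain on the positive integers (transmission-period lengths) with transition probabilities r_{i,1} = p11^{(i+1)} and r_{i,j} = p10^{(i+1)}·p00^{j−2}·p01 for j ≥ 2. Define ω̄' = B/(1 − p11^{(2)} + B), where p11^{(2)} = p10·p01 + p11·p11 and B = [p01/(1 + p01 − p11)]·(1 + (p11 − p01)³·(1 − p11)/(1 − (1 − p01)·(p11 − p01))). Then the sequence λ given by λ_1 = ω̄' and λ_k = (1 − ω̄')·p00^{k−2}·p01 for k ≥ 2 is a probability distribution satisfying the stationarity equations Σ_i λ_i·r_{i,j} = λ_j for every j ≥ 1; moreover Σ_k k·λ_k = 1 + (1 − ω̄')/p01, and consequently the steady-state throughput U = 1/(Σ_k k·λ_k) equals p01/(1 − ω̄' + p01). -/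
/-!
Write `x_m` for the `(1,1)` entry of `P ^ m`. Rows of `P ^ m` sum to one, so
`x_{m+1} = p01 + (p11 - p01) x_m` and `x_m = (p01 + p10 (p11 - p01) ^ m) / (p01 + p10)`.
Since `λ` has the geometric tail `(1 - ω̄') p01 p00 ^ m`, the sum `∑ λ_i x_{i+1}` splits into
`ω̄' x_2` plus two geometric series, whose value is `(1 - ω̄') B`; and `ω̄'` is precisely the
solution of `ω̄' x_2 + (1 - ω̄') B = ω̄'`, i.e. stationarity at `j = 1`. As `r_{i,j}` for `j ≥ 2`
is `1 - r_{i,1}` times a factor depending on `j` only, stationarity at `j ≥ 2` follows from that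
at `j = 1` and `∑ λ_i = 1`. The mean is that of a geometric distribution.
-/

open Matrix

lemma hasSum_geometric_mul {p : ℝ} (hp : 0 < p) (hp1 : p ≤ 1) :
    HasSum (fun n : ℕ => (1 - p) ^ n * p) 1 := by
  have h := (hasSum_geometric_of_lt_one (sub_nonneg.2 hp1) (by linarith)).mul_right p
  rwa [sub_sub_cancel, inv_mul_cancel₀ hp.ne'] at h

lemma hasSum_coe_mul_geometric_mul {p : ℝ} (hp : 0 < p) (hp1 : p ≤ 1) :
    HasSum (fun n : ℕ => (n : ℝ) * ((1 - p) ^ n * p)) ((1 - p) / p) := by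
  have hq : ‖1 - p‖ < 1 := by rw [Real.norm_eq_abs, abs_lt]; constructor <;> linarith
  have h := (hasSum_coe_mul_geometric_of_norm_lt_one hq).mul_right p
  rw [sub_sub_cancel, show (1 - p) / p ^ 2 * p = (1 - p) / p by field_simp] at h
  exact h.congr_fun fun n => by ring

section GeometricTail

variable {lam : ℕ → ℝ} {w p : ℝ}

lemma hasSum_mul_of_geometric_tail {x : ℕ → ℝ} {s : ℝ} (hhead : lam 1 = w)
    (htail : ∀ m, lam (m + 2) = (1 - w) * ((1 - p) ^ m * p))
    (hx : HasSum (fun m => (1 - p) ^ m * p * x (m + 2)) s) :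
    HasSum (fun k => lam (k + 1) * x (k + 1)) (w * x 1 + (1 - w) * s) := by
  have h : HasSum (fun k => lam (k + 1 + 1) * x (k + 1 + 1)) ((1 - w) * s) :=
    (hx.mul_left (1 - w)).congr_fun fun m => by rw [htail]; ring
  have h' := h.zero_add (f := fun k => lam (k + 1) * x (k + 1))
  rwa [zero_add, hhead] at h'

lemma hasSum_of_geometric_tail_s14 (hp : 0 < p) (hp1 : p ≤ 1) (hhead : lam 1 = w)
    (htail : ∀ m, lam (m + 2) = (1 - w) * ((1 - p) ^ m * p)) :
    HasSum (fun k => lam (k + 1)) 1 := by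
  have h := hasSum_mul_of_geometric_tail (x := fun _ => 1) hhead htail
    ((hasSum_geometric_mul hp hp1).congr_fun fun m => mul_one _)
  simpa using h

lemma hasSum_succ_mul_of_geometric_tail_s14 (hp : 0 < p) (hp1 : p ≤ 1) (hhead : lam 1 = w)
    (htail : ∀ m, lam (m + 2) = (1 - w) * ((1 - p) ^ m * p)) :
    HasSum (fun k : ℕ => ((k : ℝ) + 1) * lam (k + 1)) (1 + (1 - w) / p) := by
  have h := hasSum_mul_of_geometric_tail (x := fun k => (k : ℝ)) hhead htail
    (((hasSum_coe_mul_geometric_mul hp hp1).add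
      ((hasSum_geometric_mul hp hp1).mul_left 2)).congr_fun fun m => by push_cast; ring)
  rw [show 1 + (1 - w) / p = w * ((1 : ℕ) : ℝ) + (1 - w) * ((1 - p) / p + 2 * 1) by
    field_simp; ring]
  exact h.congr_fun fun k => by push_cast; ring

lemma nonneg_of_geometric_tail (hp : 0 ≤ p) (hp1 : p ≤ 1) (hw : w ∈ Set.Icc 0 1)
    (hhead : lam 1 = w) (htail : ∀ m, lam (m + 2) = (1 - w) * ((1 - p) ^ m * p)) :
    ∀ k, 1 ≤ k → 0 ≤ lam k
  | 1, _ => hhead ▸ hw.1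
  | m + 2, _ => htail m ▸
    mul_nonneg (sub_nonneg.2 hw.2) (mul_nonneg (pow_nonneg (sub_nonneg.2 hp1) _) hp)

end GeometricTail

lemma mul_add_one_sub_mul_eq_of_eq_div {a b w : ℝ} (ha : a ≤ 1) (hb : 0 ≤ b)
    (hw : w = b / (1 - a + b)) : w * a + (1 - w) * b = w := by
  rcases (show 0 ≤ 1 - a + b by linarith).eq_or_lt with h | h
  · obtain rfl : b = 0 := by linarith
    obtain rfl : a = 1 := by linarith
    simp
  · rw [hw]; field_simp; ring

lemma mem_Icc_of_eq_div {a b w : ℝ} (ha : a ≤ 1) (hb : 0 ≤ b) (hw : w = b / (1 - a + b)) :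
    w ∈ Set.Icc 0 1 := by
  rw [hw]
  exact ⟨div_nonneg hb (by linarith), div_le_one_of_le₀ (by linarith) (by linarith)⟩

section TwoStateChain

variable (p01 p11 : ℝ)

def gilbertElliottMatrix : Matrix (Fin 2) (Fin 2) ℝ := !![1 - p01, p01; 1 - p11, p11]

variable {p01 p11}

lemma gilbertElliottMatrix_mem_rowStochastic (h01 : 0 ≤ p01) (h01' : p01 ≤ 1) (h11 : 0 ≤ p11)
    (h11' : p11 ≤ 1) : gilbertElliottMatrix p01 p11 ∈ rowStochastic ℝ (Fin 2) := by
  refine mem_rowStochastic_iff_sum.2 ⟨fun i j => ?_, fun i => ?_⟩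
  · fin_cases i <;> fin_cases j <;>
      simp only [gilbertElliottMatrix, Fin.zero_eta, Fin.mk_one, of_apply, cons_val', cons_val_zero,
        cons_val_one, cons_val_fin_one] <;> linarith
  · fin_cases i <;> simp [gilbertElliottMatrix, Fin.sum_univ_two]

lemma gilbertElliottMatrix_pow_one_zero (m : ℕ) :
    (gilbertElliottMatrix p01 p11 ^ m) 1 0 = 1 - (gilbertElliottMatrix p01 p11 ^ m) 1 1 := by
  induction m with
  | zero => simp
  | succ m ih =>
    simp only [pow_succ, mul_apply, Fin.sum_univ_two, ih]
    simp only [gilbertElliottMatrix, of_apply, cons_val', cons_val_zero, cons_val_one, cons_val_fin_one]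
    ring

lemma gilbertElliottMatrix_pow_one_one (hD : 1 + p01 - p11 ≠ 0) (m : ℕ) :
    (gilbertElliottMatrix p01 p11 ^ m) 1 1
      = (p01 + (1 - p11) * (p11 - p01) ^ m) / (1 + p01 - p11) := by
  induction m with
  | zero => rw [pow_zero, one_apply_eq, pow_zero, mul_one, eq_div_iff hD]; ring
  | succ m ih =>
    rw [pow_succ, mul_apply, Fin.sum_univ_two, gilbertElliottMatrix_pow_one_zero, ih]
    simp only [gilbertElliottMatrix, of_apply, cons_val', cons_val_zero, cons_val_one, cons_val_fin_one]
    field_simp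
    ring

lemma gilbertElliottMatrix_sq_one_one :
    (gilbertElliottMatrix p01 p11 ^ 2) 1 1 = (1 - p11) * p01 + p11 * p11 := by
  simp [sq, mul_apply, Fin.sum_univ_two, gilbertElliottMatrix]

lemma hasSum_geometric_mul_gilbertElliottMatrix_pow_one_one (h01 : 0 < p01) (h01' : p01 ≤ 1)
    (h11 : 0 ≤ p11) (h11' : p11 ≤ 1) :
    HasSum (fun m : ℕ => (1 - p01) ^ m * p01 * (gilbertElliottMatrix p01 p11 ^ (m + 3)) 1 1)
      (p01 / (1 + p01 - p11) *
        (1 + (p11 - p01) ^ 3 * (1 - p11) / (1 - (1 - p01) * (p11 - p01)))) := by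
  have hD : 0 < 1 + p01 - p11 := by linarith
  have hq : |1 - p01| < 1 := by rw [abs_lt]; constructor <;> linarith
  have hqd : |(1 - p01) * (p11 - p01)| < 1 := by
    rw [abs_mul]
    exact mul_lt_one_of_nonneg_of_lt_one_left (abs_nonneg _) hq
      (abs_le.2 ⟨by linarith, by linarith⟩)
  have hE : 0 < 1 - (1 - p01) * (p11 - p01) := by linarith [le_abs_self ((1 - p01) * (p11 - p01))]
  have hsum : p01 / (1 + p01 - p11) *
      (1 + (p11 - p01) ^ 3 * (1 - p11) / (1 - (1 - p01) * (p11 - p01)))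
      = p01 ^ 2 / (1 + p01 - p11) * (1 - (1 - p01))⁻¹
        + p01 * (1 - p11) * (p11 - p01) ^ 3 / (1 + p01 - p11) *
          (1 - (1 - p01) * (p11 - p01))⁻¹ := by
    rw [sub_sub_cancel]
    field_simp [h01.ne', hE.ne']
  rw [hsum]
  refine (((hasSum_geometric_of_abs_lt_one hq).mul_left _).add
    ((hasSum_geometric_of_abs_lt_one hqd).mul_left _)).congr_fun fun m => ?_
  rw [gilbertElliottMatrix_pow_one_one hD.ne', mul_pow]
  field_simp
  ring

lemma tsum_mul_transition_eq_s14 {lam : ℕ → ℝ} {r : ℕ → ℕ → ℝ} {w : ℝ}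
    (hmass : HasSum (fun k => lam (k + 1)) 1) (hhead : lam 1 = w)
    (htail : ∀ m, lam (m + 2) = (1 - w) * ((1 - p01) ^ m * p01))
    (hr1 : ∀ i, 1 ≤ i → r i 1 = (gilbertElliottMatrix p01 p11 ^ (i + 1)) 1 1)
    (hr2 : ∀ i, 1 ≤ i → ∀ j, 2 ≤ j →
      r i j = (gilbertElliottMatrix p01 p11 ^ (i + 1)) 1 0 * (1 - p01) ^ (j - 2) * p01)
    (hstay : HasSum (fun i => lam (i + 1) * (gilbertElliottMatrix p01 p11 ^ (i + 1 + 1)) 1 1)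
      w) :
    ∀ j, 1 ≤ j → ∑' i, lam (i + 1) * r (i + 1) j = lam j
  | 1, _ => by
    rw [hhead, ← hstay.tsum_eq]
    exact tsum_congr fun i => by rw [hr1 _ (by omega)]
  | j + 2, _ => by
    have hswitch := (hmass.sub hstay).mul_right ((1 - p01) ^ j * p01)
    rw [htail, ← hswitch.tsum_eq]
    refine tsum_congr fun i => ?_
    rw [hr2 _ (by omega) _ (by omega), gilbertElliottMatrix_pow_one_zero, Nat.add_sub_cancel]
    ring

end TwoStateChain

/-- Throughput of the myopic policy for two channels, case `p11 < p01`: the explicit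
sequence `λ` is a probability distribution on the positive integers, is stationary for the
transmission-period-length Markov chain with transition probabilities `r`, has mean
`1 + (1−ω̄')/p01`, and yields steady-state throughput
`U = 1/L̄ = p01/(1−ω̄'+p01)`. -/
theorem myopic_throughput_two_channels_neg
    (p01 p11 p10 p00 : ℝ)
    (h0 : 0 ≤ p11) (h11 : p11 < p01) (h1 : p01 ≤ 1)
    (hp10 : p10 = 1 - p11) (hp00 : p00 = 1 - p01)
    (P : Matrix (Fin 2) (Fin 2) ℝ)
    (hP : P = !![p00, p01; p10, p11])
    (r : ℕ → ℕ → ℝ)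
    (hr1 : ∀ i, 1 ≤ i → r i 1 = (P ^ (i + 1)) 1 1)
    (hr2 : ∀ i, 1 ≤ i → ∀ j, 2 ≤ j → r i j = (P ^ (i + 1)) 1 0 * p00 ^ (j - 2) * p01)
    (p11two B ωbar' : ℝ)
    (hp11two : p11two = p10 * p01 + p11 * p11)
    (hB : B = p01 / (1 + p01 - p11) *
      (1 + (p11 - p01) ^ 3 * (1 - p11) / (1 - (1 - p01) * (p11 - p01))))
    (hωbar' : ωbar' = B / (1 - p11two + B))
    (lam : ℕ → ℝ)
    (hlam1 : lam 1 = ωbar')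
    (hlam2 : ∀ k, 2 ≤ k → lam k = (1 - ωbar') * p00 ^ (k - 2) * p01) :
    (∀ k, 1 ≤ k → 0 ≤ lam k) ∧
    (∑' k : ℕ, lam (k + 1)) = 1 ∧
    (∀ j, 1 ≤ j → (∑' i : ℕ, lam (i + 1) * r (i + 1) j) = lam j) ∧
    (∑' k : ℕ, ((k : ℝ) + 1) * lam (k + 1)) = 1 + (1 - ωbar') / p01 ∧
    1 / (∑' k : ℕ, ((k : ℝ) + 1) * lam (k + 1)) = p01 / (1 - ωbar' + p01) := by
  subst hp10 hp00 hp11two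
  obtain rfl : P = gilbertElliottMatrix p01 p11 := hP
  have hp01 : 0 < p01 := h0.trans_lt h11
  have hG := gilbertElliottMatrix_mem_rowStochastic hp01.le h1 h0 (h11.le.trans h1)
  have hBsum := hasSum_geometric_mul_gilbertElliottMatrix_pow_one_one hp01 h1 h0 (h11.le.trans h1)
  rw [← hB] at hBsum
  have hsq : (1 - p11) * p01 + p11 * p11 ≤ 1 :=
    gilbertElliottMatrix_sq_one_one (p01 := p01) ▸ le_one_of_mem_rowStochastic (pow_mem hG 2)
  have hB0 : 0 ≤ B := hBsum.nonneg fun m => mul_nonneg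
    (mul_nonneg (pow_nonneg (by linarith) _) hp01.le) (nonneg_of_mem_rowStochastic (pow_mem hG _))
  have htail : ∀ m, lam (m + 2) = (1 - ωbar') * ((1 - p01) ^ m * p01) := fun m => by
    rw [hlam2 _ (by omega), Nat.add_sub_cancel]; ring
  have hmass := hasSum_of_geometric_tail_s14 hp01 h1 hlam1 htail
  have hstay := hasSum_mul_of_geometric_tail
    (x := fun k => (gilbertElliottMatrix p01 p11 ^ (k + 1)) 1 1) hlam1 htail hBsum
  rw [gilbertElliottMatrix_sq_one_one, mul_add_one_sub_mul_eq_of_eq_div hsq hB0 hωbar'] at hstay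
  have hmean := hasSum_succ_mul_of_geometric_tail_s14 hp01 h1 hlam1 htail
  refine ⟨nonneg_of_geometric_tail hp01.le h1 (mem_Icc_of_eq_div hsq hB0 hωbar') hlam1 htail,
    hmass.tsum_eq, tsum_mul_transition_eq_s14 hmass hlam1 htail hr1 hr2 hstay, hmean.tsum_eq, ?_⟩
  rw [hmean.tsum_eq, one_add_div hp01.ne', one_div_div, add_comm p01]
end

section
/- (Monotonicity and convergence of the throughput bounds, case p11 ≥ p01.) Let 0 ≤ p01 ≤ p11 < 1, p10 = 1 − p11, ω_o = p01/(p01 + p10). For an integer N ≥ 2 define C(N) = ω_o·(1 − (p11 − p01)^N), D(N) = ω_o·(1 − (p11 − p01)^{N+1}·(1 − p11)/(1 − p11² + p11·p01)), the lower bound LB(N) = C(N)/(C(N) + (1 − D(N) + C(N))·(1 − p11)), and the upper bound UB = ω_o/(1 − p11 + ω_o). Then for every N ≥ 2: LB(N) ≤ LB(N+1) and LB(N) ≤ UB; moreover LB(N) converges to UB as N → ∞. -/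
/-!
With `r = p11 - p01 ∈ [0, 1)`, both `C(N)` and `D(N)` have the form `ω_o (1 - κ rᴺ)` with
`κ ≥ 0`, so they increase geometrically fast to `ω_o`. The lower bound is
`c / (c + (1 - d + c) q)` with `q = 1 - p11 > 0`, which is nondecreasing in `c ≥ 0` and in
`d < 1`, and at `c = d = ω_o` it equals `ω_o / (q + ω_o) = UB`.
-/

open Filter Topology

noncomputable def throughputRatio (q c d : ℝ) : ℝ := c / (c + (1 - d + c) * q)

lemma throughputRatio_le_throughputRatio {q c₁ c₂ d₁ d₂ : ℝ} (hq : 0 < q) (hc₁ : 0 ≤ c₁)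
    (hc : c₁ ≤ c₂) (hd : d₁ ≤ d₂) (hd₂ : d₂ < 1) :
    throughputRatio q c₁ d₁ ≤ throughputRatio q c₂ d₂ := by
  have h₁ : 0 < c₁ + (1 - d₁ + c₁) * q := by nlinarith
  have h₂ : 0 < c₂ + (1 - d₂ + c₂) * q := by nlinarith
  rw [throughputRatio, throughputRatio, div_le_div_iff₀ h₁ h₂]
  -- the cross-multiplied difference is `q ((c₂ - c₁) (1 - d₂) + c₁ (d₂ - d₁))`
  nlinarith [mul_nonneg (mul_nonneg (sub_nonneg.2 hc) (sub_nonneg.2 hd₂.le)) hq.le,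
    mul_nonneg (mul_nonneg (hc₁.trans hc) (sub_nonneg.2 hd)) hq.le]

lemma throughputRatio_self (q ω : ℝ) : throughputRatio q ω ω = ω / (q + ω) := by
  rw [throughputRatio]
  ring_nf

lemma Filter.Tendsto.throughputRatio {α : Type*} {l : Filter α} {c d : α → ℝ} {q ω : ℝ}
    (hc : Tendsto c l (𝓝 ω)) (hd : Tendsto d l (𝓝 ω)) (hqω : q + ω ≠ 0) :
    Tendsto (fun n => _root_.throughputRatio q (c n) (d n)) l (𝓝 (ω / (q + ω))) := by
  rw [← throughputRatio_self]
  refine hc.div (hc.add (((tendsto_const_nhds.sub hd).add hc).mul_const q)) ?_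
  rwa [sub_add_cancel, one_mul, add_comm]

section GeometricApproach

variable {ω κ r : ℝ}

lemma monotone_mul_one_sub_mul_pow (hω : 0 ≤ ω) (hκ : 0 ≤ κ) (hr₀ : 0 ≤ r) (hr₁ : r ≤ 1) :
    Monotone fun n : ℕ => ω * (1 - κ * r ^ n) := fun _ _ hmn => by
  have := pow_le_pow_of_le_one hr₀ hr₁ hmn
  dsimp only
  gcongr

lemma mul_one_sub_mul_pow_le (hω : 0 ≤ ω) (hκ : 0 ≤ κ) (hr₀ : 0 ≤ r) (n : ℕ) :
    ω * (1 - κ * r ^ n) ≤ ω :=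
  mul_le_of_le_one_right hω (sub_le_self _ (by positivity))

lemma mul_one_sub_mul_pow_nonneg (hω : 0 ≤ ω) (hκ : κ ≤ 1) (hr₀ : 0 ≤ r) (hr₁ : r ≤ 1)
    (n : ℕ) : 0 ≤ ω * (1 - κ * r ^ n) := by
  have := pow_nonneg hr₀ n
  have := pow_le_one₀ hr₀ hr₁ (n := n)
  exact mul_nonneg hω (by nlinarith)

lemma tendsto_mul_one_sub_mul_pow (hr₀ : 0 ≤ r) (hr₁ : r < 1) :
    Tendsto (fun n : ℕ => ω * (1 - κ * r ^ n)) atTop (𝓝 ω) := by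
  simpa using ((tendsto_pow_atTop_nhds_zero_of_lt_one hr₀ hr₁).const_mul κ).const_sub 1
    |>.const_mul ω

end GeometricApproach

section GeometricThroughputRatio

variable {q ω κ κ' r : ℝ}

lemma monotone_throughputRatio_geom (hq : 0 < q) (hω₀ : 0 ≤ ω) (hω₁ : ω < 1) (hκ₀ : 0 ≤ κ)
    (hκ₁ : κ ≤ 1) (hκ' : 0 ≤ κ') (hr₀ : 0 ≤ r) (hr₁ : r ≤ 1) :
    Monotone fun n : ℕ => throughputRatio q (ω * (1 - κ * r ^ n)) (ω * (1 - κ' * r ^ n)) :=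
  fun _ n hmn => throughputRatio_le_throughputRatio hq
    (mul_one_sub_mul_pow_nonneg hω₀ hκ₁ hr₀ hr₁ _)
    (monotone_mul_one_sub_mul_pow hω₀ hκ₀ hr₀ hr₁ hmn)
    (monotone_mul_one_sub_mul_pow hω₀ hκ' hr₀ hr₁ hmn)
    ((mul_one_sub_mul_pow_le hω₀ hκ' hr₀ n).trans_lt hω₁)

lemma throughputRatio_geom_le (hq : 0 < q) (hω₀ : 0 ≤ ω) (hω₁ : ω < 1) (hκ₀ : 0 ≤ κ)
    (hκ₁ : κ ≤ 1) (hκ' : 0 ≤ κ') (hr₀ : 0 ≤ r) (hr₁ : r ≤ 1) (n : ℕ) :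
    throughputRatio q (ω * (1 - κ * r ^ n)) (ω * (1 - κ' * r ^ n)) ≤ ω / (q + ω) :=
  throughputRatio_self q ω ▸ throughputRatio_le_throughputRatio hq
    (mul_one_sub_mul_pow_nonneg hω₀ hκ₁ hr₀ hr₁ n) (mul_one_sub_mul_pow_le hω₀ hκ₀ hr₀ n)
    (mul_one_sub_mul_pow_le hω₀ hκ' hr₀ n) hω₁

lemma tendsto_throughputRatio_geom (hq : 0 < q) (hω₀ : 0 ≤ ω) (hr₀ : 0 ≤ r) (hr₁ : r < 1) :
    Tendsto (fun n : ℕ => throughputRatio q (ω * (1 - κ * r ^ n)) (ω * (1 - κ' * r ^ n)))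
      atTop (𝓝 (ω / (q + ω))) :=
  (tendsto_mul_one_sub_mul_pow hr₀ hr₁).throughputRatio
    (tendsto_mul_one_sub_mul_pow hr₀ hr₁) (by positivity)

end GeometricThroughputRatio

/-- Monotonicity and convergence of the throughput bounds for `p11 ≥ p01`: the lower bound
`LB(N)` is nondecreasing in `N`, never exceeds the upper bound `UB`, and converges to `UB`
as the number of channels `N → ∞`. -/
theorem throughput_bounds_monotone_pos
    (p01 p11 p10 ωo : ℝ)
    (h0 : 0 ≤ p01) (h01 : p01 ≤ p11) (h1 : p11 < 1)
    (hp10 : p10 = 1 - p11) (hωo : ωo = p01 / (p01 + p10))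
    (C D LB : ℕ → ℝ) (UB : ℝ)
    (hC : ∀ N, 2 ≤ N → C N = ωo * (1 - (p11 - p01) ^ N))
    (hD : ∀ N, 2 ≤ N → D N = ωo *
      (1 - (p11 - p01) ^ (N + 1) * (1 - p11) / (1 - p11 ^ 2 + p11 * p01)))
    (hLB : ∀ N, 2 ≤ N → LB N = C N / (C N + (1 - D N + C N) * (1 - p11)))
    (hUB : UB = ωo / (1 - p11 + ωo)) :
    (∀ N, 2 ≤ N → LB N ≤ LB (N + 1) ∧ LB N ≤ UB) ∧
    Filter.Tendsto LB Filter.atTop (nhds UB) := by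
  have hq : 0 < 1 - p11 := by linarith
  have hr₀ : 0 ≤ p11 - p01 := by linarith
  have hr₁ : p11 - p01 < 1 := by linarith
  have hω₀ : 0 ≤ ωo := by
    rw [hωo, hp10]
    exact div_nonneg h0 (by linarith)
  have hω₁ : ωo < 1 := by
    rw [hωo, hp10, div_lt_one (by linarith)]
    linarith
  set κ := (p11 - p01) * (1 - p11) / (1 - p11 ^ 2 + p11 * p01)
  have hκ : 0 ≤ κ := div_nonneg (by positivity) (by nlinarith)
  have hLB_eq : ∀ N, 2 ≤ N → LB N = throughputRatio (1 - p11)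
      (ωo * (1 - 1 * (p11 - p01) ^ N)) (ωo * (1 - κ * (p11 - p01) ^ N)) := by
    intro N hN
    rw [hLB N hN, hC N hN, hD N hN, throughputRatio]
    ring
  refine ⟨fun N hN => ?_, ?_⟩
  · rw [hLB_eq N hN, hLB_eq (N + 1) (by omega), hUB]
    exact ⟨monotone_throughputRatio_geom hq hω₀ hω₁ zero_le_one le_rfl hκ hr₀ hr₁.le N.le_succ,
      throughputRatio_geom_le hq hω₀ hω₁ zero_le_one le_rfl hκ hr₀ hr₁.le N⟩
  · rw [hUB]
    refine (tendsto_throughputRatio_geom (κ := 1) (κ' := κ) hq hω₀ hr₀ hr₁).congr' ?_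
    filter_upwards [eventually_ge_atTop 2] with N hN
    exact (hLB_eq N hN).symm
end

section
/- (Monotonicity and geometric convergence of the throughput bounds, case p11 < p01.) Let 0 ≤ p11 < p01 ≤ 1 with p01 − p11 < 1, let p10 = 1 − p11, p00 = 1 − p01, ω_o = p01/(p01 + p10), and define: p10^{(2)} = p10·p00 + p11·p10; F = (1 − p01)·(1 − ω_o)·(1/(2 − p01) − p01·(p11 − p01)⁴/(1 − (p11 − p01)²·(1 − p01)²)); E = p10^{(2)}·(1 + p01) + p01·(1 − F); G = (1 − ω_o)·(1/(2 − p01) − p01·(p11 − p01)⁶/(1 − (p11 − p01)²·(1 − p01)²)); and for N ≥ 3, H(N) = (1 − ω_o)·(1/(2 − p01) − p01·(p11 − p01)^{2N−1}/(1 − (p11 − p01)²·(1 − p01)²)). Set LB(N) = 1 − p10^{(2)}/(E − p01·H(N)) and UB = 1 − p10^{(2)}/(E − p01·G), and assume E − p01·H(N) > 0 for all N ≥ 3 and E − p01·G > 0. Then for every N ≥ 3: LB(N) ≤ LB(N+1) and LB(N) ≤ UB; moreover LB(N) converges as N → ∞ to L* = 1 − p10^{(2)}/(E − p01·(1 − ω_o)/(2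 − p01)), and there exists a constant K ≥ 0 such that |L* − LB(N)| ≤ K·(p01 − p11)^{2N} for all N ≥ 3; i.e., the lower bound converges at geometric rate (p01 − p11)². -/
/-! All three bounds have the form `1 - P / (E - q h)` with `P = p10^{(2)} ≥ 0`, `q = p01 ≥ 0`,
evaluated at `h = H N`, `h = G` and `h = A := (1 - ω_o)/(2 - p01)` respectively. This is
nonincreasing in `h`, and Lipschitz on `h ≤ H 3`, where `E - q h ≥ E - q H 3 > 0`.
With `r = p01 - p11 ∈ (0, 1)`, the odd power `(p11 - p01)^(2N-1) = -r^(2N-1)` gives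
`H N = A + c r^(2N-1)` with `c ≥ 0`, decreasing to `A` at rate `r²`, while the even power in `G`
gives `G = A - c r^6 ≤ H N`. -/

open Filter Topology

noncomputable def throughputBound (P E q h : ℝ) : ℝ := 1 - P / (E - q * h)

section throughputBound

variable {P E q : ℝ}

lemma throughputBound_le_of_le (hP : 0 ≤ P) (hq : 0 ≤ q) {h h' : ℝ} (hh : h' ≤ h)
    (hpos : 0 < E - q * h) : throughputBound P E q h ≤ throughputBound P E q h' := by
  have : E - q * h ≤ E - q * h' := by nlinarith
  unfold throughputBound
  gcongr

lemma abs_div_sub_div_le {δ x y : ℝ} (hP : 0 ≤ P) (hδ : 0 < δ) (hx : δ ≤ x) (hy : δ ≤ y) :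
    |P / x - P / y| ≤ P / δ ^ 2 * |x - y| := by
  have hx0 : 0 < x := hδ.trans_le hx
  have hy0 : 0 < y := hδ.trans_le hy
  have hxy : δ ^ 2 ≤ x * y := by rw [sq]; exact mul_le_mul hx hy hδ.le hx0.le
  rw [show P / x - P / y = P * (y - x) / (x * y) by field_simp, abs_div, abs_mul,
    abs_of_nonneg hP, abs_of_pos (mul_pos hx0 hy0), abs_sub_comm, mul_div_right_comm]
  gcongr

lemma abs_throughputBound_sub_le {δ : ℝ} (hP : 0 ≤ P) (hq : 0 ≤ q) (hδ : 0 < δ) {h h' : ℝ}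
    (hh : δ ≤ E - q * h) (hh' : δ ≤ E - q * h') :
    |throughputBound P E q h - throughputBound P E q h'| ≤ P * q / δ ^ 2 * |h - h'| := by
  calc |throughputBound P E q h - throughputBound P E q h'|
      = |P / (E - q * h') - P / (E - q * h)| := by unfold throughputBound; ring_nf
    _ ≤ P / δ ^ 2 * |(E - q * h') - (E - q * h)| := abs_div_sub_div_le hP hδ hh' hh
    _ = P * q / δ ^ 2 * |h - h'| := by
      rw [show E - q * h' - (E - q * h) = q * (h - h') by ring, abs_mul, abs_of_nonneg hq]
      ring

end throughputBound

section geometricCorrection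

variable {A c r : ℝ} {H : ℕ → ℝ} {n₀ : ℕ}

lemma le_of_eq_add_mul_pow (hc : 0 ≤ c) (hr : 0 ≤ r)
    (hH : ∀ N, n₀ ≤ N → H N = A + c * r ^ (2 * N - 1)) {N : ℕ} (hN : n₀ ≤ N) : A ≤ H N := by
  rw [hH N hN]
  exact le_add_of_nonneg_right (by positivity)

lemma antitone_of_eq_add_mul_pow (hc : 0 ≤ c) (hr0 : 0 ≤ r) (hr1 : r ≤ 1)
    (hH : ∀ N, n₀ ≤ N → H N = A + c * r ^ (2 * N - 1)) {N M : ℕ} (hN : n₀ ≤ N) (hNM : N ≤ M) :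
    H M ≤ H N := by
  rw [hH N hN, hH M (hN.trans hNM)]
  gcongr A + c * ?_
  exact pow_le_pow_of_le_one hr0 hr1 (by omega)

lemma exists_abs_throughputBound_sub_le_mul_pow {P E q : ℝ} (hP : 0 ≤ P) (hq : 0 ≤ q)
    (hc : 0 ≤ c) (hr0 : 0 < r) (hr1 : r ≤ 1) (hn₀ : 0 < n₀)
    (hH : ∀ N, n₀ ≤ N → H N = A + c * r ^ (2 * N - 1)) (hpos : 0 < E - q * H n₀) :
    ∃ K, 0 ≤ K ∧ ∀ N, n₀ ≤ N →
      |throughputBound P E q A - throughputBound P E q (H N)| ≤ K * r ^ (2 * N) := by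
  set δ := E - q * H n₀
  refine ⟨P * q / δ ^ 2 * (c / r), by positivity, fun N hN => ?_⟩
  have hδA : δ ≤ E - q * A := by
    have := le_of_eq_add_mul_pow hc hr0.le hH le_rfl
    nlinarith
  have hδN : δ ≤ E - q * H N := by
    have := antitone_of_eq_add_mul_pow hc hr0.le hr1 hH le_rfl hN
    nlinarith
  have hpow : r ^ (2 * N) = r ^ (2 * N - 1) * r := by rw [← pow_succ]; congr 1; omega
  calc |throughputBound P E q A - throughputBound P E q (H N)|
      ≤ P * q / δ ^ 2 * |A - H N| := abs_throughputBound_sub_le hP hq hpos hδA hδN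
    _ = P * q / δ ^ 2 * (c / r) * r ^ (2 * N) := by
      rw [hH N hN, show A - (A + c * r ^ (2 * N - 1)) = -(c * r ^ (2 * N - 1)) by ring, abs_neg,
        abs_of_nonneg (by positivity), hpow]
      field_simp

end geometricCorrection

lemma tendsto_of_abs_sub_le_mul_pow {u : ℕ → ℝ} {L K ρ : ℝ} (hρ : |ρ| < 1)
    (h : ∀ᶠ N in atTop, |L - u N| ≤ K * ρ ^ N) : Tendsto u atTop (𝓝 L) := by
  have hlim : Tendsto (fun N => K * ρ ^ N) atTop (𝓝 0) := by
    simpa using (tendsto_pow_atTop_nhds_zero_of_abs_lt_one hρ).const_mul K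
  rw [tendsto_iff_norm_sub_tendsto_zero]
  refine squeeze_zero' (Eventually.of_forall fun _ => norm_nonneg _) ?_ hlim
  filter_upwards [h] with N hN
  rwa [Real.norm_eq_abs, abs_sub_comm]

lemma exists_nonneg_correction_coeff {p01 p11 ωo : ℝ} (hp : 0 ≤ p01) (h1 : p01 ≤ 1)
    (hr : |p11 - p01| < 1) (hω : ωo ≤ 1) :
    ∃ c, 0 ≤ c ∧ ∀ n : ℕ, (1 - ωo) *
      (1 / (2 - p01) - p01 * (p11 - p01) ^ n / (1 - (p11 - p01) ^ 2 * (1 - p01) ^ 2)) =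
        (1 - ωo) / (2 - p01) - c * (p11 - p01) ^ n := by
  have hD : 0 < 1 - (p11 - p01) ^ 2 * (1 - p01) ^ 2 := by
    have : (p11 - p01) ^ 2 < 1 := (sq_lt_one_iff_abs_lt_one _).2 hr
    have : (1 - p01) ^ 2 ≤ 1 := by nlinarith
    nlinarith
  refine ⟨(1 - ωo) * p01 / (1 - (p11 - p01) ^ 2 * (1 - p01) ^ 2),
    div_nonneg (mul_nonneg (sub_nonneg.2 hω) hp) hD.le, fun n => ?_⟩
  ring

theorem throughput_bounds_monotone_geometric_neg_general
    (p01 p11 p10 p00 ωo : ℝ)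
    (h0 : 0 ≤ p11) (h11 : p11 < p01) (h1 : p01 ≤ 1) (hx : p01 - p11 < 1)
    (hp10 : p10 = 1 - p11) (hp00 : p00 = 1 - p01)
    (hωo : ωo = p01 / (p01 + p10))
    (p10two E G : ℝ) (H LB : ℕ → ℝ) (UB Lstar : ℝ)
    (hp10two : p10two = p10 * p00 + p11 * p10)
    (hG : G = (1 - ωo) *
      (1 / (2 - p01) - p01 * (p11 - p01) ^ 6 / (1 - (p11 - p01) ^ 2 * (1 - p01) ^ 2)))
    (hH : ∀ N, 3 ≤ N → H N = (1 - ωo) *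
      (1 / (2 - p01) -
        p01 * (p11 - p01) ^ (2 * N - 1) / (1 - (p11 - p01) ^ 2 * (1 - p01) ^ 2)))
    (hLB : ∀ N, 3 ≤ N → LB N = 1 - p10two / (E - p01 * H N))
    (hUB : UB = 1 - p10two / (E - p01 * G))
    (hposH : ∀ N, 3 ≤ N → 0 < E - p01 * H N)
    (hLstar : Lstar = 1 - p10two / (E - p01 * ((1 - ωo) / (2 - p01)))) :
    (∀ N, 3 ≤ N → LB N ≤ LB (N + 1) ∧ LB N ≤ UB) ∧
    Filter.Tendsto LB Filter.atTop (nhds Lstar) ∧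
    ∃ K : ℝ, 0 ≤ K ∧ ∀ N, 3 ≤ N →
      |Lstar - LB N| ≤ K * (p01 - p11) ^ (2 * N) := by
  have hp01 : 0 < p01 := h0.trans_lt h11
  have hr : 0 < p01 - p11 := sub_pos.2 h11
  have hω : ωo ≤ 1 := by
    rw [hωo]
    exact div_le_one_of_le₀ (by linarith) (by linarith)
  have hP : 0 ≤ p10two := by rw [hp10two, hp10, hp00]; nlinarith
  obtain ⟨c, hc, hcorr⟩ := exists_nonneg_correction_coeff hp01.le h1
    (by rw [abs_sub_comm, abs_of_pos hr]; exact hx) hω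
  set A := (1 - ωo) / (2 - p01)
  have hHA : ∀ N, 3 ≤ N → H N = A + c * (p01 - p11) ^ (2 * N - 1) := fun N hN => by
    rw [hH N hN, hcorr, show p11 - p01 = -(p01 - p11) by ring,
      (show Odd (2 * N - 1) from ⟨N - 1, by omega⟩).neg_pow]
    ring
  have hGH : ∀ N, 3 ≤ N → G ≤ H N := fun N hN => by
    have := le_of_eq_add_mul_pow hc hr.le hHA hN
    rw [hG, hcorr, show p11 - p01 = -(p01 - p11) by ring]
    nlinarith [pow_pos hr 6]
  obtain ⟨K, hK, hKbound⟩ := exists_abs_throughputBound_sub_le_mul_pow hP hp01.le hc hr hx.le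
    (by norm_num) hHA (hposH 3 le_rfl)
  have hbound : ∀ N, 3 ≤ N → |Lstar - LB N| ≤ K * (p01 - p11) ^ (2 * N) := fun N hN => by
    rw [hLstar, hLB N hN]
    exact hKbound N hN
  refine ⟨fun N hN => ⟨?_, ?_⟩, tendsto_of_abs_sub_le_mul_pow (K := K) (ρ := (p01 - p11) ^ 2)
    ?_ ?_, K, hK, hbound⟩
  · rw [hLB N hN, hLB (N + 1) (by omega)]
    exact throughputBound_le_of_le hP hp01.le
      (antitone_of_eq_add_mul_pow hc hr.le hx.le hHA hN N.le_succ) (hposH N hN)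
  · rw [hLB N hN, hUB]
    exact throughputBound_le_of_le hP hp01.le (hGH N hN) (hposH N hN)
  · rw [abs_of_nonneg (sq_nonneg _)]
    exact pow_lt_one₀ hr.le hx two_ne_zero
  · filter_upwards [eventually_ge_atTop 3] with N hN
    rw [← pow_mul]
    exact hbound N hN

/-- Monotonicity and geometric convergence of the throughput bounds for `p11 < p01`:
the lower bound `LB(N)` is nondecreasing in `N`, never exceeds the upper bound `UB`,
converges as `N → ∞` to `L* = 1 − p10^{(2)}/(E − p01·(1−ω_o)/(2−p01))`, and does so at
geometric rate `(p01 − p11)²`. -/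
theorem throughput_bounds_monotone_geometric_neg
    (p01 p11 p10 p00 ωo : ℝ)
    (h0 : 0 ≤ p11) (h11 : p11 < p01) (h1 : p01 ≤ 1) (hx : p01 - p11 < 1)
    (hp10 : p10 = 1 - p11) (hp00 : p00 = 1 - p01)
    (hωo : ωo = p01 / (p01 + p10))
    (p10two F E G : ℝ) (H LB : ℕ → ℝ) (UB Lstar : ℝ)
    (hp10two : p10two = p10 * p00 + p11 * p10)
    (hF : F = (1 - p01) * (1 - ωo) *
      (1 / (2 - p01) - p01 * (p11 - p01) ^ 4 / (1 - (p11 - p01) ^ 2 * (1 - p01) ^ 2)))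
    (hE : E = p10two * (1 + p01) + p01 * (1 - F))
    (hG : G = (1 - ωo) *
      (1 / (2 - p01) - p01 * (p11 - p01) ^ 6 / (1 - (p11 - p01) ^ 2 * (1 - p01) ^ 2)))
    (hH : ∀ N, 3 ≤ N → H N = (1 - ωo) *
      (1 / (2 - p01) -
        p01 * (p11 - p01) ^ (2 * N - 1) / (1 - (p11 - p01) ^ 2 * (1 - p01) ^ 2)))
    (hLB : ∀ N, 3 ≤ N → LB N = 1 - p10two / (E - p01 * H N))
    (hUB : UB = 1 - p10two / (E - p01 * G))
    (hposH : ∀ N, 3 ≤ N → 0 < E - p01 * H N)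
    (hposG : 0 < E - p01 * G)
    (hLstar : Lstar = 1 - p10two / (E - p01 * ((1 - ωo) / (2 - p01)))) :
    (∀ N, 3 ≤ N → LB N ≤ LB (N + 1) ∧ LB N ≤ UB) ∧
    Filter.Tendsto LB Filter.atTop (nhds Lstar) ∧
    ∃ K : ℝ, 0 ≤ K ∧ ∀ N, 3 ≤ N →
      |Lstar - LB N| ≤ K * (p01 - p11) ^ (2 * N) :=
  throughput_bounds_monotone_geometric_neg_general p01 p11 p10 p00 ωo h0 h11 h1 hx hp10 hp00 hωo
    p10two E G H LB UB Lstar hp10two hG hH hLB hUB hposH hLstar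
end
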